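/- arXiv:1609.00179 — 6 statements merged into one kernel-verified Lean document; each statement's English description precedes it below -/
import Mathlib

section
/- Let r > 2. Suppose (q_n) is a sequence of positive reals with q_n → 0, and for each n, u_n : ℝ → ℝ is a bounded, four times continuously differentiable function satisfying u_n'''' + q_n·u_n'' + |u_n|^{r−2}·u_n = 0 at every point of ℝ. Then sup_{x∈ℝ} |u_n(x)| → 0 as n → ∞. -/
/-!
Rescaling `u` by its supremum `S` in value and by `S ^ ((2 - r) / 4)` in length gives a solution
of `v'''' + ε v'' + |v| ^ (r - 2) v = 0` with `|v| ≤ 1`, `|v 0| > 1 / 2` and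
`ε = q S ^ ((2 - r) / 2)`, which is small when `q` is small and `S` is not. Such solutions cannot
exist for small `ε`. Their derivatives up to order four are bounded by absolute constants:
Taylor's formula bounds `|v''|` at a point by `64 + (1 + sup |v''| nearby) / 48`, and a Grönwall
bound on the growth of `v''` lets this self-improving estimate be iterated. The flux
`F = v''' v - v'' v' + ε v v'` satisfies `F' = ε v' ^ 2 - (|v| ^ r + v'' ^ 2)`. By pigeonhole,
far to the left and far to the right of `0` there are short intervals on which the density
`|v| ^ r + v'' ^ 2` has tiny integral, so that `v`, `v''`, hence `F`, are small at their right
endpoints. Integrating `F'` between two such endpoints bounds the integral of the density, which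
is at least a fixed constant because `|v|` stays large near `0`, by `O(ε)` plus a small term.
-/

open Filter Set Real

theorem abs_rpow_sub_two_mul_self {r : ℝ} (hr : r ≠ 1) (t : ℝ) :
    |(|t| ^ (r - 2) * t)| = |t| ^ (r - 1) := by
  rw [abs_mul, abs_of_nonneg (rpow_nonneg (abs_nonneg t) _), ← rpow_add_one' (abs_nonneg t)]
  · ring_nf
  · contrapose! hr; linarith

theorem rpow_sub_two_mul_self_mul_self {r : ℝ} (hr : r ≠ 0) (t : ℝ) :
    |t| ^ (r - 2) * t * t = |t| ^ r := by
  calc |t| ^ (r - 2) * t * t = |t| ^ (r - 2) * |t| ^ (2 : ℝ) := by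
        rw [mul_assoc, ← abs_mul_abs_self, rpow_two, sq]
    _ = |t| ^ r := by rw [← rpow_add' (abs_nonneg t) (by simpa)]; ring_nf

theorem abs_sub_le_of_forall_abs_deriv_le {f f' : ℝ → ℝ} (hf : ∀ x, HasDerivAt f (f' x) x)
    {C : ℝ} (hC : ∀ x, |f' x| ≤ C) (a b : ℝ) : |f b - f a| ≤ C * |b - a| :=
  convex_univ.norm_image_sub_le_of_norm_hasDerivWithin_le (fun x _ ↦ (hf x).hasDerivWithinAt)
    (fun x _ ↦ hC x) (mem_univ a) (mem_univ b)

theorem abs_deriv_le_two_mul_add {f f' f'' : ℝ → ℝ} (hf : ∀ x, HasDerivAt f (f' x) x)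
    (hf' : ∀ x, HasDerivAt f' (f'' x) x) {A B : ℝ} (hA : ∀ x, |f x| ≤ A)
    (hB : ∀ x, |f'' x| ≤ B) (x : ℝ) : |f' x| ≤ 2 * A + B := by
  obtain ⟨m, hm, hslope⟩ := exists_hasDerivAt_eq_slope f f' (lt_add_one x)
    (fun y _ ↦ (hf y).continuousAt.continuousWithinAt) (fun y _ ↦ hf y)
  rw [add_sub_cancel_left, div_one] at hslope
  have hfm : |f' m| ≤ 2 * A := by
    rw [hslope]
    linarith [abs_sub (f (x + 1)) (f x), hA (x + 1), hA x]
  have hxm : |x - m| ≤ 1 := by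
    rw [abs_le]; constructor <;> linarith [hm.1, hm.2]
  have hlip := abs_sub_le_of_forall_abs_deriv_le hf' hB m x
  have hB0 : 0 ≤ B := (abs_nonneg _).trans (hB x)
  nlinarith [abs_sub_abs_le_abs_sub (f' x) (f' m)]

theorem taylor_three_integral_remainder {f₀ f₁ f₂ f₃ f₄ : ℝ → ℝ}
    (h₀ : ∀ x, HasDerivAt f₀ (f₁ x) x) (h₁ : ∀ x, HasDerivAt f₁ (f₂ x) x)
    (h₂ : ∀ x, HasDerivAt f₂ (f₃ x) x) (h₃ : ∀ x, HasDerivAt f₃ (f₄ x) x)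
    (hc : Continuous f₄) (a b : ℝ) :
    f₀ b = f₀ a + (b - a) * f₁ a + (b - a) ^ 2 / 2 * f₂ a + (b - a) ^ 3 / 6 * f₃ a
      + ∫ s in a..b, (b - s) ^ 3 / 6 * f₄ s := by
  set g : ℝ → ℝ := fun t ↦ f₀ t + (b - t) * f₁ t + (b - t) ^ 2 / 2 * f₂ t
    + (b - t) ^ 3 / 6 * f₃ t
  have hg : ∀ t, HasDerivAt g ((b - t) ^ 3 / 6 * f₄ t) t := fun t ↦ by
    have hb : HasDerivAt (fun y : ℝ ↦ b - y) (-1) t := by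
      simpa using (hasDerivAt_id t).const_sub b
    exact ((((h₀ t).add (hb.mul (h₁ t))).add (((hb.pow 2).div_const 2).mul (h₂ t))).add
      (((hb.pow 3).div_const 6).mul (h₃ t))).congr_deriv (by simp only [Pi.pow_apply]; ring)
  have hint : IntervalIntegrable (fun s ↦ (b - s) ^ 3 / 6 * f₄ s) MeasureTheory.volume a b :=
    (by fun_prop : Continuous fun s ↦ (b - s) ^ 3 / 6 * f₄ s).intervalIntegrable a b
  rw [intervalIntegral.integral_eq_sub_of_hasDerivAt (fun t _ ↦ hg t) hint]
  simp only [g, sub_self]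
  ring

theorem abs_second_deriv_le {f₀ f₁ f₂ f₃ f₄ : ℝ → ℝ}
    (h₀ : ∀ x, HasDerivAt f₀ (f₁ x) x) (h₁ : ∀ x, HasDerivAt f₁ (f₂ x) x)
    (h₂ : ∀ x, HasDerivAt f₂ (f₃ x) x) (h₃ : ∀ x, HasDerivAt f₃ (f₄ x) x)
    (hc : Continuous f₄) {A M h y : ℝ} (hh : 0 < h) (hA : ∀ x, |f₀ x| ≤ A)
    (hM : ∀ z, |z - y| ≤ h → |f₄ z| ≤ M) :
    |f₂ y| ≤ 4 * A / h ^ 2 + M * h ^ 2 / 3 := by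
  have hrem : ∀ b, |b - y| = h →
      |∫ s in y..b, (b - s) ^ 3 / 6 * f₄ s| ≤ h ^ 3 / 6 * M * h := by
    intro b hb
    have := intervalIntegral.norm_integral_le_of_norm_le_const (a := y) (b := b)
      (f := fun s ↦ (b - s) ^ 3 / 6 * f₄ s) (C := h ^ 3 / 6 * M) fun s hs ↦ by
        have hs' := uIoc_subset_uIcc hs
        have hbs : |b - s| ≤ h := hb ▸ abs_sub_right_of_mem_uIcc hs'
        have hf₄ := hM s (hb ▸ abs_sub_left_of_mem_uIcc hs')
        rw [Real.norm_eq_abs, abs_mul, abs_div, abs_pow, abs_of_pos (by norm_num : (0 : ℝ) < 6)]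
        gcongr
    rwa [Real.norm_eq_abs, hb] at this
  have hplus := taylor_three_integral_remainder h₀ h₁ h₂ h₃ hc y (y + h)
  have hminus := taylor_three_integral_remainder h₀ h₁ h₂ h₃ hc y (y - h)
  have rp := abs_le.1 (hrem (y + h) (by rw [add_sub_cancel_left, abs_of_pos hh]))
  have rm := abs_le.1 (hrem (y - h) (by rw [sub_sub_cancel_left, abs_neg, abs_of_pos hh]))
  have hdiff : h ^ 2 * f₂ y = f₀ (y + h) + f₀ (y - h) - 2 * f₀ y
      - (∫ s in y..y + h, (y + h - s) ^ 3 / 6 * f₄ s)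
      - ∫ s in y..y - h, (y - h - s) ^ 3 / 6 * f₄ s := by
    rw [hplus, hminus]; ring
  have hAp := abs_le.1 (hA (y + h))
  have hAm := abs_le.1 (hA (y - h))
  have hA0 := abs_le.1 (hA y)
  have : h ^ 2 * |f₂ y| ≤ 4 * A + M * h ^ 4 / 3 := by
    rw [← abs_of_pos (by positivity : 0 < h ^ 2), ← abs_mul, hdiff, abs_le]
    constructor <;> nlinarith
  rw [div_add_div _ _ (by positivity) (by norm_num), le_div_iff₀ (by positivity)]
  nlinarith

theorem norm_le_gronwallBound_abs {E : Type*} [NormedAddCommGroup E] [NormedSpace ℝ E]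
    {f f' : ℝ → E} (hf : ∀ x, HasDerivAt f (f' x) x) {K ε : ℝ}
    (bound : ∀ x, ‖f' x‖ ≤ K * ‖f x‖ + ε) (x : ℝ) :
    ‖f x‖ ≤ gronwallBound ‖f 0‖ K ε |x| := by
  have forward : ∀ {g g' : ℝ → E}, (∀ x, HasDerivAt g (g' x) x) →
      (∀ x, ‖g' x‖ ≤ K * ‖g x‖ + ε) → ∀ x, 0 ≤ x → ‖g x‖ ≤ gronwallBound ‖g 0‖ K ε x := by
    intro g g' hg hbound x hx
    simpa using norm_le_gronwallBound_of_norm_deriv_right_le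
      (fun y _ ↦ (hg y).continuousAt.continuousWithinAt) (fun y _ ↦ (hg y).hasDerivWithinAt)
      le_rfl (fun y _ ↦ hbound y) x ⟨hx, le_rfl⟩
  rcases le_total 0 x with hx | hx
  · rw [abs_of_nonneg hx]
    exact forward hf bound x hx
  · have hneg : ∀ t, HasDerivAt (fun t ↦ f (-t)) ((-1 : ℝ) • f' (-t)) t := fun t ↦
      (hf (-t)).scomp t (hasDerivAt_neg t)
    have := forward hneg (fun t ↦ by simpa using bound (-t)) (-x) (neg_nonneg.2 hx)
    simpa [abs_of_nonpos hx] using this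

theorem le_div_one_sub_of_local_bound {g : ℝ → ℝ} {A θ h C : ℝ} (hA : 0 ≤ A) (hθ : 0 ≤ θ)
    (hh : 0 ≤ h) (hθh : θ * exp h < 1) (hC : 0 ≤ C) (hgrowth : ∀ y, g y ≤ C * exp |y|)
    (hstep : ∀ y B, (∀ z, |z - y| ≤ h → g z ≤ B) → g y ≤ A + θ * B) (y : ℝ) :
    g y ≤ A / (1 - θ) := by
  have hθ1 : θ < 1 := lt_of_le_of_lt (le_mul_of_one_le_right hθ (one_le_exp hh)) hθh
  have hθ1' : 1 - θ ≠ 0 := by linarith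
  have hbound : ∀ n : ℕ, ∀ y, g y ≤ A / (1 - θ) + C * (θ * exp h) ^ n * exp |y| := by
    intro n
    induction n with
    | zero =>
      intro y
      have : 0 ≤ A / (1 - θ) := div_nonneg hA (by linarith)
      simpa using (hgrowth y).trans (le_add_of_nonneg_left this)
    | succ n ih =>
      intro y
      refine (hstep y (A / (1 - θ) + C * (θ * exp h) ^ n * exp (|y| + h))
        fun z hz ↦ (ih z).trans ?_).trans_eq ?_
      · gcongr
        linarith [abs_sub_abs_le_abs_sub z y]
      · rw [exp_add]
        field_simp
        ring
  have hlim : Tendsto (fun n : ℕ ↦ A / (1 - θ) + C * (θ * exp h) ^ n * exp |y|) atTop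
      (nhds (A / (1 - θ))) := by
    have := ((tendsto_pow_atTop_nhds_zero_of_lt_one (by positivity) hθh).const_mul C).mul_const
      (exp |y|)
    simpa using this.const_add (A / (1 - θ))
  exact ge_of_tendsto' hlim fun n ↦ hbound n y

theorem exists_le_integral_div {g : ℝ → ℝ} (hg : Continuous g) {a b : ℝ} (hab : a < b) :
    ∃ p ∈ Icc a b, g p ≤ (∫ x in a..b, g x) / (b - a) := by
  obtain ⟨p, hp, hmin⟩ := isCompact_Icc.exists_isMinOn (nonempty_Icc.2 hab.le) hg.continuousOn
  refine ⟨p, hp, (le_div_iff₀ (sub_pos.2 hab)).2 ?_⟩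
  have := intervalIntegral.integral_mono_on (μ := MeasureTheory.volume) hab.le
    intervalIntegrable_const (hg.intervalIntegrable a b) fun x hx ↦ hmin hx
  simpa [mul_comm] using this

theorem abs_le_add_of_integral_rpow_le {f f' : ℝ → ℝ} (hf : ∀ x, HasDerivAt f (f' x) x)
    {L : ℝ} (hL : ∀ x, |f' x| ≤ L) {p t a b : ℝ} (hp : 0 < p) (ht : 0 ≤ t) (hab : a < b)
    (hI : ∫ x in a..b, |f x| ^ p ≤ (b - a) * t ^ p) : |f b| ≤ t + L * (b - a) := by
  have hcont : Continuous fun x ↦ |f x| ^ p :=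
    (continuous_iff_continuousAt.2 fun x ↦ (hf x).continuousAt).abs.rpow_const
      fun _ ↦ Or.inr hp.le
  obtain ⟨y, hy, hfy⟩ := exists_le_integral_div hcont hab
  have hfy' : |f y| ≤ t := by
    rw [← rpow_le_rpow_iff (abs_nonneg _) ht hp]
    exact hfy.trans ((div_le_iff₀' (sub_pos.2 hab)).2 hI)
  have hlip := abs_sub_le_of_forall_abs_deriv_le hf hL y b
  have hby : |b - y| ≤ b - a := by
    rw [abs_of_nonneg (by linarith [hy.2])]; linarith [hy.1]
  have hL0 : 0 ≤ L := (abs_nonneg _).trans (hL a)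
  nlinarith [abs_sub_abs_le_abs_sub (f b) (f y)]

theorem exists_integral_le_div {g : ℝ → ℝ} (hg : Continuous g) (a ℓ : ℝ) {N : ℕ}
    (hN : 0 < N) :
    ∃ k < N, ∫ x in a + k * ℓ..a + (k + 1) * ℓ, g x ≤ (∫ x in a..a + N * ℓ, g x) / N := by
  have hsum := intervalIntegral.sum_integral_adjacent_intervals (a := fun k : ℕ ↦ a + k * ℓ)
    (n := N) (μ := MeasureTheory.volume) fun k _ ↦ hg.intervalIntegrable _ _
  push_cast at hsum
  rw [zero_mul, add_zero] at hsum
  have hmean : ∑ k ∈ Finset.range N, ∫ x in a + k * ℓ..a + (k + 1) * ℓ, g x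
      = ∑ _k ∈ Finset.range N, (∫ x in a..a + N * ℓ, g x) / N := by
    rw [hsum, Finset.sum_const, Finset.card_range, nsmul_eq_mul,
      mul_div_cancel₀ _ (by positivity)]
  obtain ⟨k, hk, hle⟩ := Finset.exists_le_of_sum_le (Finset.nonempty_range_iff.2 hN.ne')
    hmean.le
  exact ⟨k, Finset.mem_range.1 hk, hle⟩

structure NormalizedSolution (r ε : ℝ) where
  D : ℕ → ℝ → ℝ
  hasDerivAt : ∀ k < 4, ∀ x, HasDerivAt (D k) (D (k + 1) x) x
  abs_le_one : ∀ x, |D 0 x| ≤ 1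
  ode : ∀ x, D 4 x + ε * D 2 x + |D 0 x| ^ (r - 2) * D 0 x = 0
  two_le : 2 ≤ r
  nonneg : 0 ≤ ε
  le_one : ε ≤ 1

namespace NormalizedSolution

variable {r ε : ℝ} (s : NormalizedSolution r ε)

theorem hasDerivAt₀ (x : ℝ) : HasDerivAt (s.D 0) (s.D 1 x) x := s.hasDerivAt 0 (by norm_num) x
theorem hasDerivAt₁ (x : ℝ) : HasDerivAt (s.D 1) (s.D 2 x) x := s.hasDerivAt 1 (by norm_num) x
theorem hasDerivAt₂ (x : ℝ) : HasDerivAt (s.D 2) (s.D 3 x) x := s.hasDerivAt 2 (by norm_num) x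
theorem hasDerivAt₃ (x : ℝ) : HasDerivAt (s.D 3) (s.D 4 x) x := s.hasDerivAt 3 (by norm_num) x

theorem continuous_D {k : ℕ} (hk : k < 4) : Continuous (s.D k) :=
  continuous_iff_continuousAt.2 fun x ↦ (s.hasDerivAt k hk x).continuousAt

theorem D4_eq (x : ℝ) : s.D 4 x = -(ε * s.D 2 x) - |s.D 0 x| ^ (r - 2) * s.D 0 x := by
  linarith [s.ode x]

theorem continuous_D4 : Continuous (s.D 4) := by
  have h0 := s.continuous_D (k := 0) (by norm_num)
  have h2 := s.continuous_D (k := 2) (by norm_num)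
  have hr : 0 ≤ r - 2 := by linarith [s.two_le]
  rw [funext s.D4_eq]
  exact (continuous_const.mul h2).neg.sub
    ((h0.abs.rpow_const fun _ ↦ Or.inr hr).mul h0)

theorem abs_D4_le_abs_D2_add_one (x : ℝ) : |s.D 4 x| ≤ |s.D 2 x| + 1 := by
  have hN : |(|s.D 0 x| ^ (r - 2) * s.D 0 x)| ≤ 1 := by
    rw [abs_rpow_sub_two_mul_self (by linarith [s.two_le])]
    exact rpow_le_one (abs_nonneg _) (s.abs_le_one x) (by linarith [s.two_le])
  have hε : |ε * s.D 2 x| ≤ |s.D 2 x| := by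
    rw [abs_mul, abs_of_nonneg s.nonneg]
    exact mul_le_of_le_one_left (abs_nonneg _) s.le_one
  rw [s.D4_eq]
  linarith [abs_sub (-(ε * s.D 2 x)) (|s.D 0 x| ^ (r - 2) * s.D 0 x), abs_neg (ε * s.D 2 x)]

theorem exists_abs_D2_le_mul_exp : ∃ C, 0 ≤ C ∧ ∀ x, |s.D 2 x| ≤ C * exp |x| := by
  set f : ℝ → ℝ × ℝ := fun x ↦ (s.D 2 x, s.D 3 x)
  have hf : ∀ x, HasDerivAt f (s.D 3 x, s.D 4 x) x := fun x ↦
    (s.hasDerivAt₂ x).prodMk (s.hasDerivAt₃ x)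
  have hbound : ∀ x, ‖(s.D 3 x, s.D 4 x)‖ ≤ 1 * ‖f x‖ + 1 := fun x ↦ by
    simp only [f, Prod.norm_mk, Real.norm_eq_abs, one_mul]
    have := s.abs_D4_le_abs_D2_add_one x
    exact max_le (by linarith [le_max_right |s.D 2 x| |s.D 3 x|])
      (by linarith [le_max_left |s.D 2 x| |s.D 3 x|])
  refine ⟨‖f 0‖ + 1, by positivity, fun x ↦ ?_⟩
  have hg := norm_le_gronwallBound_abs hf hbound x
  simp only [gronwallBound_of_K_ne_0 one_ne_zero, one_mul, div_one] at hg
  have h2 : |s.D 2 x| ≤ ‖f x‖ := by simp [f]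
  linarith

theorem abs_D2_le (x : ℝ) : |s.D 2 x| ≤ 66 := by
  obtain ⟨C, hC, hgrowth⟩ := s.exists_abs_D2_le_mul_exp
  have hexp : (1 / 48 : ℝ) * exp (1 / 4) < 1 := by
    have := (exp_le_exp.2 (by norm_num : (1 / 4 : ℝ) ≤ 1)).trans_lt exp_one_lt_d9
    linarith
  have hstep : ∀ y B, (∀ z, |z - y| ≤ 1 / 4 → |s.D 2 z| ≤ B) →
      |s.D 2 y| ≤ (64 + 1 / 48) + 1 / 48 * B := fun y B hB ↦ by
    have := abs_second_deriv_le s.hasDerivAt₀ s.hasDerivAt₁ s.hasDerivAt₂ s.hasDerivAt₃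
      s.continuous_D4 (M := B + 1) (by norm_num : (0 : ℝ) < 1 / 4) s.abs_le_one
      fun z hz ↦ (s.abs_D4_le_abs_D2_add_one z).trans (by linarith [hB z hz])
    linarith
  -- `(64 + 1 / 48) / (1 - 1 / 48) = 3073 / 47 < 66`
  have := le_div_one_sub_of_local_bound (by norm_num) (by norm_num) (by norm_num) hexp hC
    hgrowth hstep x
  norm_num at this ⊢
  linarith

theorem abs_D4_le (x : ℝ) : |s.D 4 x| ≤ 67 := by
  linarith [s.abs_D4_le_abs_D2_add_one x, s.abs_D2_le x]

theorem abs_D1_le (x : ℝ) : |s.D 1 x| ≤ 68 := by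
  linarith [abs_deriv_le_two_mul_add s.hasDerivAt₀ s.hasDerivAt₁ s.abs_le_one s.abs_D2_le x]

theorem abs_D3_le (x : ℝ) : |s.D 3 x| ≤ 199 := by
  linarith [abs_deriv_le_two_mul_add s.hasDerivAt₂ s.hasDerivAt₃ s.abs_D2_le s.abs_D4_le x]

noncomputable def flux (x : ℝ) : ℝ :=
  s.D 3 x * s.D 0 x - s.D 2 x * s.D 1 x + ε * (s.D 0 x * s.D 1 x)

noncomputable def density (x : ℝ) : ℝ := |s.D 0 x| ^ r + s.D 2 x ^ 2

theorem continuous_rpow_abs_D0 : Continuous fun x ↦ |s.D 0 x| ^ r :=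
  (s.continuous_D (by norm_num)).abs.rpow_const fun _ ↦ Or.inr (by linarith [s.two_le])

theorem continuous_density : Continuous s.density :=
  s.continuous_rpow_abs_D0.add ((s.continuous_D (by norm_num)).pow 2)

theorem rpow_abs_D0_le_density (x : ℝ) : |s.D 0 x| ^ r ≤ s.density x :=
  le_add_of_nonneg_right (sq_nonneg _)

theorem sq_D2_le_density (x : ℝ) : s.D 2 x ^ 2 ≤ s.density x :=
  le_add_of_nonneg_left (rpow_nonneg (abs_nonneg _) _)

theorem density_nonneg (x : ℝ) : 0 ≤ s.density x :=
  (sq_nonneg _).trans (s.sq_D2_le_density x)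

theorem hasDerivAt_flux (x : ℝ) : HasDerivAt s.flux (ε * s.D 1 x ^ 2 - s.density x) x := by
  have h := (((s.hasDerivAt₃ x).mul (s.hasDerivAt₀ x)).sub
    ((s.hasDerivAt₂ x).mul (s.hasDerivAt₁ x))).add
    (((s.hasDerivAt₀ x).mul (s.hasDerivAt₁ x)).const_mul ε)
  refine h.congr_deriv ?_
  rw [s.D4_eq, density]
  linear_combination -rpow_sub_two_mul_self_mul_self (by linarith [s.two_le] : r ≠ 0) (s.D 0 x)

theorem integral_density_eq (a b : ℝ) :
    ∫ x in a..b, s.density x = ε * (∫ x in a..b, s.D 1 x ^ 2) - (s.flux b - s.flux a) := by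
  have hD1 : IntervalIntegrable (fun x ↦ ε * s.D 1 x ^ 2) MeasureTheory.volume a b :=
    (continuous_const.mul ((s.continuous_D (by norm_num)).pow 2)).intervalIntegrable a b
  have hρ := s.continuous_density.intervalIntegrable (μ := MeasureTheory.volume) a b
  have := intervalIntegral.integral_eq_sub_of_hasDerivAt (fun x _ ↦ s.hasDerivAt_flux x)
    (hD1.sub hρ)
  rw [intervalIntegral.integral_sub hD1 hρ, intervalIntegral.integral_const_mul] at this
  linarith

theorem abs_flux_le_of_abs (x : ℝ) :
    |s.flux x| ≤ 199 * |s.D 0 x| + 68 * |s.D 2 x| + 68 * ε := by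
  have h30 : |s.D 3 x * s.D 0 x| ≤ 199 * |s.D 0 x| := by
    rw [abs_mul]; gcongr; exact s.abs_D3_le x
  have h21 : |s.D 2 x * s.D 1 x| ≤ 68 * |s.D 2 x| := by
    rw [abs_mul, mul_comm]; gcongr; exact s.abs_D1_le x
  have h01 : |ε * (s.D 0 x * s.D 1 x)| ≤ 68 * ε := by
    rw [abs_mul, abs_mul, abs_of_nonneg s.nonneg, mul_comm]
    gcongr
    · exact s.nonneg
    · nlinarith [s.abs_le_one x, s.abs_D1_le x, abs_nonneg (s.D 0 x), abs_nonneg (s.D 1 x)]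
  unfold flux
  linarith [abs_add_le (s.D 3 x * s.D 0 x - s.D 2 x * s.D 1 x) (ε * (s.D 0 x * s.D 1 x)),
    abs_sub (s.D 3 x * s.D 0 x) (s.D 2 x * s.D 1 x)]

theorem abs_flux_le (x : ℝ) : |s.flux x| ≤ 4755 := by
  linarith [s.abs_flux_le_of_abs x, s.abs_le_one x, s.abs_D2_le x, s.le_one]

theorem integral_density_le {a b : ℝ} (hab : a ≤ b) :
    ∫ x in a..b, s.density x ≤ 4624 * ε * (b - a) + |s.flux a| + |s.flux b| := by
  have hD1 : ∫ x in a..b, s.D 1 x ^ 2 ≤ 4624 * (b - a) := by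
    have := intervalIntegral.integral_mono_on (μ := MeasureTheory.volume) hab
      (((s.continuous_D (by norm_num)).pow 2).intervalIntegrable a b) intervalIntegrable_const
      fun x _ ↦ (sq_le_sq' (abs_le.1 (s.abs_D1_le x)).1 (abs_le.1 (s.abs_D1_le x)).2).trans_eq
        (by norm_num : (68 : ℝ) ^ 2 = 4624)
    simpa [mul_comm] using this
  rw [s.integral_density_eq]
  nlinarith [mul_le_mul_of_nonneg_left hD1 s.nonneg, neg_abs_le (s.flux b),
    le_abs_self (s.flux a)]

theorem abs_flux_le_of_integral_density_le {t a b : ℝ} (ht : 0 ≤ t) (ht1 : t ≤ 1)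
    (hab : a < b) (hI : ∫ x in a..b, s.density x ≤ (b - a) * t ^ r) :
    |s.flux b| ≤ 267 * t + 27064 * (b - a) + 68 * ε := by
  have hρ := s.continuous_density.intervalIntegrable (μ := MeasureTheory.volume) a b
  have hD0 : |s.D 0 b| ≤ t + 68 * (b - a) := by
    refine abs_le_add_of_integral_rpow_le s.hasDerivAt₀ s.abs_D1_le
      (by linarith [s.two_le]) ht hab (le_trans ?_ hI)
    exact intervalIntegral.integral_mono_on hab.le
      (s.continuous_rpow_abs_D0.intervalIntegrable a b) hρ fun x _ ↦ s.rpow_abs_D0_le_density x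
  have hD2 : |s.D 2 b| ≤ t + 199 * (b - a) := by
    refine abs_le_add_of_integral_rpow_le s.hasDerivAt₂ s.abs_D3_le two_pos ht hab ?_
    calc ∫ x in a..b, |s.D 2 x| ^ (2 : ℝ) ≤ ∫ x in a..b, s.density x := by
          refine intervalIntegral.integral_mono_on hab.le ?_ hρ fun x _ ↦ ?_
          · exact ((s.continuous_D (k := 2) (by norm_num)).abs.rpow_const
              fun _ ↦ Or.inr two_pos.le).intervalIntegrable a b
          · simpa [rpow_two] using s.sq_D2_le_density x
      _ ≤ (b - a) * t ^ r := hI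
      _ ≤ (b - a) * t ^ (2 : ℝ) := mul_le_mul_of_nonneg_left
          (rpow_le_rpow_of_exponent_ge' ht ht1 two_pos.le s.two_le) (by linarith)
  nlinarith [s.abs_flux_le_of_abs b, s.nonneg]

theorem lt_integral_rpow_abs_D0 (h0 : 1 / 2 ≤ |s.D 0 0|) :
    1 / 272 * (1 / 8) ^ r < ∫ x in (-(1 / 272))..0, |s.D 0 x| ^ r := by
  by_contra! hI
  have := abs_le_add_of_integral_rpow_le s.hasDerivAt₀ s.abs_D1_le (by linarith [s.two_le])
    (by norm_num : (0 : ℝ) ≤ 1 / 8) (by norm_num : -(1 / 272 : ℝ) < 0)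
    (hI.trans_eq (by ring))
  linarith

theorem exists_abs_flux_le {t ℓ : ℝ} (ht : 0 ≤ t) (ht1 : t ≤ 1) (hℓ : 0 < ℓ) {N : ℕ}
    (hN : 14134 ≤ N * ℓ * t ^ r) (hεN : ε * (N * ℓ) ≤ 1) (a : ℝ) :
    ∃ c ∈ Icc (a + ℓ) (a + N * ℓ), |s.flux c| ≤ 267 * t + 27064 * ℓ + 68 * ε := by
  have hN0 : 0 < N := by
    refine Nat.pos_of_ne_zero fun h ↦ ?_
    simp [h] at hN
    linarith
  have hNℓ : 0 ≤ (N : ℝ) * ℓ := by positivity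
  have htotal : ∫ x in a..a + N * ℓ, s.density x ≤ N * ℓ * t ^ r := by
    -- `14134 = 4624 + 2 * 4755`
    have := s.integral_density_le (le_add_of_nonneg_right hNℓ : a ≤ a + N * ℓ)
    rw [add_sub_cancel_left] at this
    linarith [s.abs_flux_le a, s.abs_flux_le (a + N * ℓ)]
  obtain ⟨k, hk, hI⟩ := exists_integral_le_div s.continuous_density a ℓ hN0
  have hk' : (k : ℝ) + 1 ≤ N := by exact_mod_cast hk
  have hblock : ∫ x in a + k * ℓ..a + (k + 1) * ℓ, s.density x
      ≤ (a + (k + 1) * ℓ - (a + k * ℓ)) * t ^ r := by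
    exact hI.trans ((div_le_iff₀ (by positivity)).2 (htotal.trans_eq (by ring)))
  refine ⟨a + (k + 1) * ℓ, ⟨by nlinarith, by nlinarith⟩, ?_⟩
  have := s.abs_flux_le_of_integral_density_le ht ht1 (by nlinarith) hblock
  rwa [show a + (k + 1) * ℓ - (a + k * ℓ) = ℓ by ring] at this

theorem lt_of_half_le_abs_D0 (h0 : 1 / 2 ≤ |s.D 0 0|) {t ℓ : ℝ} (ht : 0 ≤ t) (ht1 : t ≤ 1)
    (hℓ : 0 < ℓ) {N : ℕ} (hN : 14134 ≤ N * ℓ * t ^ r) (hεN : ε * (N * ℓ) ≤ 1) :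
    1 / 272 * (1 / 8) ^ r
      < 4624 * ε * (2 * N * ℓ + 1) + 2 * (267 * t + 27064 * ℓ + 68 * ε) := by
  obtain ⟨cL, hcL, hFL⟩ := s.exists_abs_flux_le ht ht1 hℓ hN hεN (-1 - N * ℓ)
  obtain ⟨cR, hcR, hFR⟩ := s.exists_abs_flux_le ht ht1 hℓ hN hεN 0
  have hcL' : cL ≤ -(1 / 272) := by linarith [hcL.2]
  have hcR' : 0 ≤ cR := by linarith [hcR.1]
  have hmono : ∫ x in (-(1 / 272))..0, |s.D 0 x| ^ r ≤ ∫ x in cL..cR, s.density x :=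
    (intervalIntegral.integral_mono_on (by norm_num)
      (s.continuous_rpow_abs_D0.intervalIntegrable _ _)
      (s.continuous_density.intervalIntegrable _ _) fun x _ ↦ s.rpow_abs_D0_le_density x).trans
    (intervalIntegral.integral_mono_interval hcL' (by norm_num) hcR'
      (MeasureTheory.ae_of_all _ s.density_nonneg) (s.continuous_density.intervalIntegrable _ _))
  have hwidth : 4624 * ε * (cR - cL) ≤ 4624 * ε * (2 * N * ℓ + 1) :=
    mul_le_mul_of_nonneg_left (by linarith [hcL.1, hcR.2]) (by linarith [s.nonneg])
  linarith [s.lt_integral_rpow_abs_D0 h0, s.integral_density_le (by linarith : cL ≤ cR)]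

theorem exists_forall_abs_D0_lt (r : ℝ) :
    ∃ ε₀, 0 < ε₀ ∧ ε₀ ≤ 1 ∧
      ∀ ε ≤ ε₀, ∀ s : NormalizedSolution r ε, |s.D 0 0| < 1 / 2 := by
  set c₀ : ℝ := 1 / 272 * (1 / 8) ^ r
  -- `t` and `ℓ` make `2 * (267 * t + 27064 * ℓ) ≤ c₀ / 2`; `ε₀` makes the `ε`-terms `≤ c₀ / 2`.
  set t : ℝ := min 1 (c₀ / 2136)
  set ℓ : ℝ := c₀ / 216512
  have ht : 0 < t := lt_min one_pos (by positivity)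
  have hℓ : 0 < ℓ := by positivity
  set N : ℕ := ⌈14134 / (ℓ * t ^ r)⌉₊
  have hN : 14134 ≤ N * ℓ * t ^ r := by
    rw [mul_assoc, ← div_le_iff₀ (by positivity)]
    exact Nat.le_ceil _
  have hNℓ : 0 < (N : ℝ) * ℓ := by
    by_contra! h
    nlinarith [rpow_pos_of_pos ht r]
  set K : ℝ := 4624 * (2 * N * ℓ + 1) + 136
  refine ⟨min 1 (min (1 / (N * ℓ)) (c₀ / (2 * K))), by positivity, min_le_left _ _,
    fun ε hε s ↦ ?_⟩
  by_contra! h0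
  have hεN : ε * (N * ℓ) ≤ 1 :=
    (le_div_iff₀ hNℓ).1 (hε.trans ((min_le_right _ _).trans (min_le_left _ _)))
  have hεK : ε * K ≤ c₀ / 2 := by
    have := (le_div_iff₀ (by positivity : 0 < 2 * K)).1
      (hε.trans ((min_le_right _ _).trans (min_le_right _ _)))
    linarith
  have := s.lt_of_half_le_abs_D0 h0 ht.le (min_le_left _ _) hℓ hN hεN
  have hK : ε * K = 4624 * ε * (2 * N * ℓ + 1) + 136 * ε := by ring
  have hℓc : 216512 * ℓ = c₀ := by ring
  have htc : t ≤ c₀ / 2136 := min_le_right _ _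
  have hc : c₀ = 1 / 272 * (1 / 8) ^ r := rfl
  linarith

end NormalizedSolution

theorem exists_normalizedSolution {r q S : ℝ} (hr : 2 ≤ r) (hq : 0 ≤ q) (hS : 0 < S)
    (hqS : q * S ^ ((2 - r) / 2) ≤ 1) {u : ℝ → ℝ} (hu : ContDiff ℝ 4 u)
    (huS : ∀ x, |u x| ≤ S)
    (hsol : ∀ x, iteratedDeriv 4 u x + q * iteratedDeriv 2 u x + |u x| ^ (r - 2) * u x = 0)
    (x₀ : ℝ) : ∃ s : NormalizedSolution r (q * S ^ ((2 - r) / 2)), s.D 0 0 = u x₀ / S := by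
  set σ := S ^ ((2 - r) / 4)
  have hσ2 : σ ^ 2 = S ^ ((2 - r) / 2) := by
    rw [← rpow_mul_natCast hS.le]; ring_nf
  have hσ4 : σ ^ 4 = (S ^ (r - 2))⁻¹ := by
    rw [← rpow_mul_natCast hS.le, ← rpow_neg hS.le]; ring_nf
  refine ⟨{ D := fun k x ↦ σ ^ k * iteratedDeriv k u (x₀ + σ * x) / S
            hasDerivAt := fun k hk x ↦ ?_
            abs_le_one := fun x ↦ ?_
            ode := fun x ↦ ?_
            two_le := hr
            nonneg := by positivity
            le_one := hqS }, by simp⟩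
  · have hd : HasDerivAt (iteratedDeriv k u) (iteratedDeriv (k + 1) u (x₀ + σ * x))
        (x₀ + σ * x) := by
      rw [iteratedDeriv_succ]
      exact (hu.differentiable_iteratedDeriv k (by exact_mod_cast hk) _).hasDerivAt
    have ha : HasDerivAt (fun x ↦ x₀ + σ * x) σ x := by
      simpa using ((hasDerivAt_id x).const_mul σ).const_add x₀
    exact (((hd.comp x ha).const_mul (σ ^ k)).div_const S).congr_deriv (by ring)
  · simp only [pow_zero, iteratedDeriv_zero, one_mul]
    rw [abs_div, abs_of_pos hS, div_le_one hS]
    exact huS _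
  · simp only [pow_zero, iteratedDeriv_zero, one_mul]
    have hpow : |u (x₀ + σ * x) / S| ^ (r - 2) = σ ^ 4 * |u (x₀ + σ * x)| ^ (r - 2) := by
      rw [abs_div, abs_of_pos hS, div_rpow (abs_nonneg _) hS.le, hσ4, div_eq_inv_mul]
    rw [hpow, ← hσ2]
    linear_combination σ ^ 4 / S * hsol (x₀ + σ * x)

theorem iSup_abs_lt {r q η ε₀ : ℝ} (hr : 2 ≤ r) (hη : 0 < η) (hε₀ : ε₀ ≤ 1)
    (hkey : ∀ ε ≤ ε₀, ∀ s : NormalizedSolution r ε, |s.D 0 0| < 1 / 2) (hq : 0 ≤ q)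
    (hqη : q < ε₀ * η ^ ((r - 2) / 2)) {u : ℝ → ℝ} (hu : ContDiff ℝ 4 u)
    (hbdd : BddAbove (range fun x ↦ |u x|))
    (hsol : ∀ x, iteratedDeriv 4 u x + q * iteratedDeriv 2 u x + |u x| ^ (r - 2) * u x = 0) :
    ⨆ x, |u x| < η := by
  by_contra! hηS
  set S := ⨆ x, |u x|
  have hS : 0 < S := hη.trans_le hηS
  obtain ⟨x₀, hx₀⟩ := exists_lt_of_lt_ciSup (half_lt_self hS)
  have hε : q * S ^ ((2 - r) / 2) ≤ ε₀ :=
    calc q * S ^ ((2 - r) / 2) ≤ q * η ^ ((2 - r) / 2) :=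
          mul_le_mul_of_nonneg_left (rpow_le_rpow_of_nonpos hη hηS (by linarith)) hq
      _ ≤ ε₀ * η ^ ((r - 2) / 2) * η ^ ((2 - r) / 2) :=
          mul_le_mul_of_nonneg_right hqη.le (by positivity)
      _ = ε₀ := by rw [mul_assoc, ← rpow_add hη]; ring_nf; simp
  obtain ⟨s, hs⟩ := exists_normalizedSolution hr hq hS (hε.trans hε₀) hu
    (fun x ↦ le_ciSup hbdd x) hsol x₀
  have := hkey _ hε s
  rw [hs, abs_div, abs_of_pos hS, div_lt_iff₀ hS] at this
  linarith

/-- Let `r > 2`. If `(qₙ)` are positive reals with `qₙ → 0` and each `uₙ` is a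
bounded `C⁴` solution of `uₙ'''' + qₙ uₙ'' + |uₙ|^(r−2) uₙ = 0` on `ℝ`, then
`sup_{x∈ℝ} |uₙ(x)| → 0`. -/
theorem stmt6 (r : ℝ) (hr : 2 < r)
    (q : ℕ → ℝ) (hqpos : ∀ n, 0 < q n)
    (hq0 : Filter.Tendsto q Filter.atTop (nhds 0))
    (u : ℕ → ℝ → ℝ) (hu : ∀ n, ContDiff ℝ 4 (u n))
    (hbdd : ∀ n, ∃ M : ℝ, ∀ x : ℝ, |u n x| ≤ M)
    (hsol : ∀ n, ∀ x : ℝ,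
      iteratedDeriv 4 (u n) x + q n * iteratedDeriv 2 (u n) x
        + |u n x| ^ (r - 2) * u n x = 0) :
    Filter.Tendsto (fun n => ⨆ x : ℝ, |u n x|) Filter.atTop (nhds 0) := by
  obtain ⟨ε₀, hε₀, hε₀1, hkey⟩ := NormalizedSolution.exists_forall_abs_D0_lt r
  rw [Metric.tendsto_atTop]
  intro η hη
  obtain ⟨N, hN⟩ := eventually_atTop.1
    (hq0.eventually_lt_const (by positivity : 0 < ε₀ * η ^ ((r - 2) / 2)))
  refine ⟨N, fun n hn ↦ ?_⟩
  obtain ⟨M, hM⟩ := hbdd n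
  rw [Real.dist_0_eq_abs, abs_of_nonneg (Real.iSup_nonneg fun x ↦ abs_nonneg _)]
  exact iSup_abs_lt hr.le hη hε₀1 hkey (hqpos n).le (hN n hn) (hu n)
    ⟨M, by rintro _ ⟨x, rfl⟩; exact hM x⟩ (hsol n)
end

section
/- Let G : ℝ^N → ℝ be lower semicontinuous and suppose liminf_{|x|→∞} G(x)/|x| ≥ α for some α > 0. Then the set of global minimizers of the convex envelope G* equals the convex hull of the set of global minimizers of G, i.e., Argmin(G*) = co(Argmin(G)). -/
/-!
Linear growth and lower semicontinuity make the sublevel sets of `G` compact, so `K = Argmin G`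
is nonempty and compact, and so is `co K`. The constant `min G` is a convex minorant, hence
`G* ≥ min G` everywhere, while `G* ≤ G` forces `G* = min G` on `K` and, by convexity of
`{G* ≤ min G}`, on `co K`. Conversely, separate `x ∉ co K` from `co K` by a functional with
`f < c` on `co K` and `f x > c`. On the closed half-space `{f ≥ c}` the function `G` stays above
`min G`, and by compactness near the origin and linear growth far away it even dominates
`min G + δ (f - c)` there for some `δ > 0`. So `min G + δ max (f - c) 0` is a convex minorant of
`G` whose value at `x` exceeds `min G`, and `x` is not a minimizer of `G*`.
-/

open Filter Set

noncomputable def convexEnvelope {E : Type*} [AddCommGroup E] [Module ℝ E]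
    (G : E → ℝ) : E → ℝ :=
  fun x => sSup {v : ℝ | ∃ g : E → ℝ,
    ConvexOn ℝ Set.univ g ∧ (∀ y, g y ≤ G y) ∧ g x = v}

theorem isCompact_convexHull {E : Type*} [AddCommGroup E] [Module ℝ E] [TopologicalSpace E]
    [ContinuousAdd E] [ContinuousSMul ℝ E] [FiniteDimensional ℝ E] {s : Set E}
    (hs : IsCompact s) : IsCompact (convexHull ℝ s) := by
  -- Carathéodory: every point of the hull is a convex combination of at most `finrank + 1` points
  have hcarath : convexHull ℝ s = ⋃ k : Fin (Module.finrank ℝ E + 2),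
      (fun p : (Fin k → ℝ) × (Fin k → E) => ∑ i, p.1 i • p.2 i) ''
        (stdSimplex ℝ (Fin k) ×ˢ univ.pi fun _ => s) := by
    refine Subset.antisymm (fun x hx => ?_) (iUnion_subset fun k => ?_)
    · obtain ⟨ι, _, z, w, hzs, hind, hw, hw1, rfl⟩ := eq_pos_convex_span_of_mem_convexHull hx
      have hcard : Fintype.card ι < Module.finrank ℝ E + 2 :=
        Nat.lt_succ_of_le (hind.card_le_finrank_succ.trans
          (Nat.succ_le_succ (Submodule.finrank_le _)))
      set e := Fintype.equivFin ι
      refine mem_iUnion.2 ⟨⟨_, hcard⟩, ⟨w ∘ e.symm, z ∘ e.symm⟩,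
        ⟨⟨fun i => (hw _).le, ?_⟩, fun i _ => hzs (mem_range_self _)⟩, ?_⟩
      · simpa [Function.comp_def] using (e.symm.sum_comp w).trans hw1
      · exact e.symm.sum_comp fun i => w i • z i
    · rintro _ ⟨⟨w, z⟩, ⟨hw, hz⟩, rfl⟩
      exact (convex_convexHull ℝ s).sum_mem (fun i _ => hw.1 i) hw.2
        fun i _ => subset_convexHull ℝ s (hz i (mem_univ i))
  rw [hcarath]
  exact isCompact_iUnion fun k =>
    ((isCompact_stdSimplex ℝ (Fin k)).prod (isCompact_univ_pi fun _ => hs)).image (by fun_prop)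

-- `0 ≤ b` rules out the junk value: a real `liminf` that is not bounded below is `sSup ∅ = 0`.
theorem Real.eventually_lt_of_nonneg_of_lt_liminf {α : Type*} {f : Filter α} {u : α → ℝ} {b : ℝ}
    (hb : 0 ≤ b) (h : b < liminf u f) : ∀ᶠ x in f, b < u x := by
  refine Filter.eventually_lt_of_lt_liminf h ?_
  by_contra hu
  have hempty : {a | ∀ᶠ x in f, a ≤ u x} = ∅ := eq_empty_iff_forall_notMem.2 fun a ha => hu ⟨a, ha⟩
  rw [liminf_eq, hempty, Real.sSup_empty] at h
  linarith

theorem IsCompact.exists_gt_forall_le_of_lowerSemicontinuousOn {X : Type*} [TopologicalSpace X]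
    {s : Set X} {f : X → ℝ} {m : ℝ} (hs : IsCompact s) (hf : LowerSemicontinuousOn f s)
    (hm : ∀ x ∈ s, m < f x) : ∃ m' > m, ∀ x ∈ s, m' ≤ f x := by
  rcases s.eq_empty_or_nonempty with rfl | hne
  · exact ⟨m + 1, by linarith, by simp⟩
  · obtain ⟨x₀, hx₀, hmin⟩ := hf.exists_isMinOn hne hs
    exact ⟨f x₀, hm x₀ hx₀, fun x hx => hmin hx⟩

section ConvexEnvelope

variable {E : Type*} [AddCommGroup E] [Module ℝ E] {G g : E → ℝ}

theorem le_convexEnvelope (hg : ConvexOn ℝ univ g) (hgG : ∀ y, g y ≤ G y) (x : E) :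
    g x ≤ convexEnvelope G x :=
  le_csSup ⟨G x, by rintro _ ⟨g', -, hg'G, rfl⟩; exact hg'G x⟩ ⟨g, hg, hgG, rfl⟩

theorem convexEnvelope_le (hG : BddBelow (range G)) (x : E) : convexEnvelope G x ≤ G x := by
  obtain ⟨m, hm⟩ := hG
  refine csSup_le ⟨m, fun _ => m, convexOn_const m convex_univ, fun y => hm ⟨y, rfl⟩, rfl⟩ ?_
  rintro _ ⟨g, -, hgG, rfl⟩
  exact hgG x

theorem convexOn_convexEnvelope (hG : BddBelow (range G)) :
    ConvexOn ℝ univ (convexEnvelope G) := by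
  obtain ⟨m, hm⟩ := hG
  refine ⟨convex_univ, fun x _ y _ a b ha hb hab => ?_⟩
  refine csSup_le ⟨m, fun _ => m, convexOn_const m convex_univ, fun y => hm ⟨y, rfl⟩, rfl⟩ ?_
  rintro _ ⟨g, hg, hgG, rfl⟩
  calc g (a • x + b • y) ≤ a • g x + b • g y := hg.2 trivial trivial ha hb hab
    _ ≤ a • convexEnvelope G x + b • convexEnvelope G y := by
      gcongr <;> exact le_convexEnvelope hg hgG _

theorem convexHull_argmin_subset_argmin_convexEnvelope :
    convexHull ℝ {x | ∀ y, G x ≤ G y} ⊆ {x | ∀ y, convexEnvelope G x ≤ convexEnvelope G y} := by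
  intro x hx
  obtain ⟨x₀, hx₀⟩ := convexHull_nonempty_iff.1 ⟨x, hx⟩
  have hbdd : BddBelow (range G) := ⟨G x₀, by rintro _ ⟨y, rfl⟩; exact hx₀ y⟩
  have hlow : ∀ y, G x₀ ≤ convexEnvelope G y :=
    le_convexEnvelope (convexOn_const _ convex_univ) hx₀
  have hsub : {x | ∀ y, G x ≤ G y} ⊆ {y | y ∈ univ ∧ convexEnvelope G y ≤ G x₀} :=
    fun y hy => ⟨trivial, (convexEnvelope_le hbdd y).trans (hy x₀)⟩
  exact fun y => ((convexHull_min hsub ((convexOn_convexEnvelope hbdd).convex_le _) hx).2).trans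
    (hlow y)

end ConvexEnvelope

section Growth

variable {E : Type*} [NormedAddCommGroup E] {G : E → ℝ} {a b : ℝ}

theorem exists_mul_norm_sub_le_of_lt_liminf [ProperSpace E] (hG : LowerSemicontinuous G)
    (ha : 0 ≤ a) (h : a < liminf (fun x => G x / ‖x‖) (Bornology.cobounded E)) :
    ∃ b, ∀ y, a * ‖y‖ - b ≤ G y := by
  obtain ⟨R, -, hR⟩ := hasBasis_cobounded_norm.eventually_iff.1
    (Real.eventually_lt_of_nonneg_of_lt_liminf ha h)
  obtain ⟨L, hL⟩ := (hG.lowerSemicontinuousOn _).bddBelow_of_isCompact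
    (isCompact_closedBall (0 : E) R)
  refine ⟨max (a * R - L) 0, fun y => ?_⟩
  rcases le_or_gt ‖y‖ R with hy | hy
  · have hLy : L ≤ G y := hL ⟨y, mem_closedBall_zero_iff.2 hy, rfl⟩
    nlinarith [le_max_left (a * R - L) 0]
  · have hay : a < G y / ‖y‖ := hR hy.le
    have hpos : 0 < ‖y‖ := by
      rcases (norm_nonneg y).eq_or_lt with h0 | h0
      · rw [← h0, div_zero] at hay; linarith
      · exact h0
    rw [lt_div_iff₀ hpos] at hay
    linarith [le_max_right (a * R - L) 0]

theorem isCompact_setOf_le_of_growth [ProperSpace E] (hG : LowerSemicontinuous G) (ha : 0 < a)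
    (hgrowth : ∀ y, a * ‖y‖ - b ≤ G y) (t : ℝ) : IsCompact {y | G y ≤ t} := by
  refine (isCompact_closedBall 0 ((t + b) / a)).of_isClosed_subset (hG.isClosed_preimage t)
    fun y (hy : G y ≤ t) => ?_
  rw [mem_closedBall_zero_iff, le_div_iff₀ ha]
  linarith [hgrowth y]

theorem exists_forall_le_of_growth [ProperSpace E] (hG : LowerSemicontinuous G) (ha : 0 < a)
    (hgrowth : ∀ y, a * ‖y‖ - b ≤ G y) : ∃ x₀, ∀ y, G x₀ ≤ G y := by
  obtain ⟨x₀, hx₀, hmin⟩ := (hG.lowerSemicontinuousOn _).exists_isMinOn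
    ⟨0, show G 0 ≤ G 0 from le_rfl⟩ (isCompact_setOf_le_of_growth hG ha hgrowth (G 0))
  refine ⟨x₀, fun y => ?_⟩
  by_cases hy : G y ≤ G 0
  · exact hmin hy
  · exact (hx₀ : G x₀ ≤ G 0).trans (not_le.1 hy).le

theorem exists_pos_add_mul_le_of_growth [ProperSpace E] (hG : LowerSemicontinuous G)
    (ha : 0 < a) (hgrowth : ∀ y, a * ‖y‖ - b ≤ G y) {F : Set E} {m : ℝ} (hF : IsClosed F)
    (hm : ∀ y ∈ F, m < G y) : ∃ ε > 0, ∀ y ∈ F, m + ε * (‖y‖ + 1) ≤ G y := by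
  set R := max 1 (2 * (b + m) / a)
  have hR : 1 ≤ R := le_max_left _ _
  obtain ⟨m', hm'm, hm'⟩ := ((isCompact_closedBall 0 R).inter_left hF
    ).exists_gt_forall_le_of_lowerSemicontinuousOn (hG.lowerSemicontinuousOn _)
    fun y hy => hm y hy.1
  refine ⟨min (a / 4) ((m' - m) / (R + 1)), by positivity, fun y hy => ?_⟩
  rcases le_or_gt ‖y‖ R with hyR | hyR
  · calc m + min (a / 4) ((m' - m) / (R + 1)) * (‖y‖ + 1)
        ≤ m + (m' - m) / (R + 1) * (R + 1) := by gcongr; exact min_le_right _ _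
      _ = m' := by field_simp; ring
      _ ≤ G y := hm' y ⟨hy, mem_closedBall_zero_iff.2 hyR⟩
  · have hby : 2 * (b + m) ≤ a * ‖y‖ := by
      rw [← div_le_iff₀' ha]; exact (le_max_right _ _).trans hyR.le
    calc m + min (a / 4) ((m' - m) / (R + 1)) * (‖y‖ + 1)
        ≤ m + a / 4 * (‖y‖ + ‖y‖) := by gcongr; exact min_le_left _ _; linarith
      _ ≤ a * ‖y‖ - b := by linarith
      _ ≤ G y := hgrowth y

theorem exists_convexOn_le_gt_of_notMem_convexHull_argmin [NormedSpace ℝ E]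
    [FiniteDimensional ℝ E] (hG : LowerSemicontinuous G) (ha : 0 < a)
    (hgrowth : ∀ y, a * ‖y‖ - b ≤ G y) {x₀ x : E} (hx₀ : ∀ y, G x₀ ≤ G y)
    (hx : x ∉ convexHull ℝ {x | ∀ y, G x ≤ G y}) :
    ∃ g : E → ℝ, ConvexOn ℝ univ g ∧ (∀ y, g y ≤ G y) ∧ G x₀ < g x := by
  set K := {x | ∀ y, G x ≤ G y}
  have hK : K = {x | G x ≤ G x₀} := ext fun x => ⟨fun h => h x₀, fun h y => h.trans (hx₀ y)⟩
  have hKhull : IsClosed (convexHull ℝ K) :=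
    (isCompact_convexHull (hK ▸ isCompact_setOf_le_of_growth hG ha hgrowth (G x₀))).isClosed
  obtain ⟨f, c, hfK, hfx⟩ := geometric_hahn_banach_closed_point (convex_convexHull ℝ K) hKhull hx
  obtain ⟨ε, hε, hεG⟩ := exists_pos_add_mul_le_of_growth hG ha hgrowth
    (isClosed_le continuous_const f.continuous) fun y (hy : c ≤ f y) =>
      lt_of_not_ge fun hyK => hy.not_gt (hfK y (subset_convexHull ℝ K (hK ▸ hyK)))
  set δ := ε / (‖f‖ + |c| + 1)
  refine ⟨fun y => δ * max (f y - c) 0 + G x₀, ?_, fun y => ?_, ?_⟩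
  · exact ((((f : E →ₗ[ℝ] ℝ).convexOn convex_univ).add_const (-c)).sup
      (convexOn_const 0 convex_univ)).smul (by positivity) |>.add_const _
  · rcases le_or_gt (f y) c with hyc | hyc
    · simp [max_eq_right (sub_nonpos.2 hyc), hx₀ y]
    · have hfy : f y - c ≤ (‖f‖ + |c| + 1) * (‖y‖ + 1) := by
        nlinarith [(Real.le_norm_self (f y)).trans (f.le_opNorm y), neg_abs_le c,
          mul_nonneg (abs_nonneg c) (norm_nonneg y), norm_nonneg f, norm_nonneg y]
      calc δ * max (f y - c) 0 + G x₀ ≤ δ * ((‖f‖ + |c| + 1) * (‖y‖ + 1)) + G x₀ := by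
            gcongr; exact max_le hfy (by positivity)
        _ = G x₀ + ε * (‖y‖ + 1) := by simp only [δ]; field_simp; ring
        _ ≤ G y := hεG y hyc.le
  · simp only [max_eq_left (sub_pos.2 hfx).le]
    nlinarith [mul_pos (show 0 < δ by positivity) (sub_pos.2 hfx)]

theorem argmin_convexEnvelope_subset_convexHull_argmin [NormedSpace ℝ E] [FiniteDimensional ℝ E]
    (hG : LowerSemicontinuous G) (ha : 0 < a) (hgrowth : ∀ y, a * ‖y‖ - b ≤ G y) :
    {x | ∀ y, convexEnvelope G x ≤ convexEnvelope G y} ⊆ convexHull ℝ {x | ∀ y, G x ≤ G y} := by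
  obtain ⟨x₀, hx₀⟩ := exists_forall_le_of_growth hG ha hgrowth
  intro x hx
  by_contra hxK
  obtain ⟨g, hg, hgG, hgx⟩ :=
    exists_convexOn_le_gt_of_notMem_convexHull_argmin hG ha hgrowth hx₀ hxK
  have hbdd : BddBelow (range G) := ⟨G x₀, by rintro _ ⟨y, rfl⟩; exact hx₀ y⟩
  linarith [le_convexEnvelope hg hgG x, hx x₀, convexEnvelope_le hbdd x₀]

end Growth

/-- Let `G : ℝ^N → ℝ` be lower semicontinuous with
`liminf_{|x|→∞} G(x)/|x| ≥ α` for some `α > 0`. Then `Argmin(G*) = co(Argmin(G))`,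
where `G*` is the convex envelope of `G`. -/
theorem stmt9 (N : ℕ) (G : EuclideanSpace ℝ (Fin N) → ℝ)
    (hG : LowerSemicontinuous G)
    (α : ℝ) (hα : 0 < α)
    (hliminf : α ≤ Filter.liminf (fun x => G x / ‖x‖)
      (Bornology.cobounded (EuclideanSpace ℝ (Fin N)))) :
    {x | ∀ y, convexEnvelope G x ≤ convexEnvelope G y}
      = convexHull ℝ {x | ∀ y, G x ≤ G y} := by
  obtain ⟨b, hb⟩ := exists_mul_norm_sub_le_of_lt_liminf hG (half_pos hα).le
    ((half_lt_self hα).trans_le hliminf)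
  exact (argmin_convexEnvelope_subset_convexHull_argmin hG (half_pos hα) hb).antisymm
    convexHull_argmin_subset_argmin_convexEnvelope
end

section
/- Let F : ℝ → ℝ be of class C² with 0 = F(0) = min_{t∈ℝ} F(t) and F''(0) > 0. Then for any b with 0 ≤ b < 2√(F''(0)) and any T > 0, there exist ε > 0 and θ > 0 such that for every q ≤ b and every C² function u : [0,T] → ℝ with u'(0) = u'(T) = 0 and ∫₀ᵀ (u''(x)² + u(x)²) dx ≤ ε², one has J_q(u) ≥ θ·∫₀ᵀ (u''(x)² + u(x)²) dx. -/
/-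
Choose `λ` with `b < 4λ` and `4λ² < F''(0)`, possible exactly because `b < 2√F''(0)`. Taylor's
theorem gives `F t ≥ 2λ² t²` for small `|t|`, and a small `H_T`-norm makes `u` uniformly small
(one-dimensional Sobolev embedding), so `∫ F(u) ≥ 2λ² ∫ u²`. With the Neumann conditions,
integration by parts gives `∫ u'² = -∫ u u'' ≤ λ ∫ u² + (4λ)⁻¹ ∫ u''²`, and this absorbs the term
`-q ∫ u'² / 2` into `∫ u''² / 2 + 2λ² ∫ u²` with positive coefficients left over.
-/

open Set intervalIntegral
open scoped Interval

lemma mul_sq_le_of_forall_abs_le_iteratedDeriv_two {F : ℝ → ℝ} (hF : ContDiff ℝ 2 F)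
    (hF0 : F 0 = 0) (hF'0 : deriv F 0 = 0) {c δ : ℝ}
    (hc : ∀ s, |s| ≤ δ → 2 * c ≤ iteratedDeriv 2 F s) {t : ℝ} (ht : |t| ≤ δ) :
    c * t ^ 2 ≤ F t := by
  rcases eq_or_ne 0 t with rfl | ht0
  · simp [hF0]
  obtain ⟨ξ, hξ, hTaylor⟩ :=
    taylor_mean_remainder_lagrange_iteratedDeriv (n := 1) ht0 hF.contDiffOn
  rw [taylorWithinEval_succ, taylor_within_zero_eval, iteratedDerivWithin_one,
    (hF.differentiable two_ne_zero 0).derivWithin (uniqueDiffOn_uIcc ht0 _ left_mem_uIcc)]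
    at hTaylor
  have hξt : |ξ| ≤ |t| := by
    rcases hξ with ⟨h1, h2⟩
    simp only [min_def, max_def] at h1 h2
    rw [abs_le]
    split_ifs at h1 h2 <;> cases abs_cases t <;> constructor <;> linarith
  have hcξ := hc ξ (hξt.trans ht)
  norm_num [hF0, hF'0] at hTaylor
  nlinarith [sq_nonneg t]

lemma exists_mul_sq_le_of_lt_iteratedDeriv_two {F : ℝ → ℝ} (hF : ContDiff ℝ 2 F)
    (hF0 : F 0 = 0) (hmin : ∀ t, F 0 ≤ F t) {c : ℝ} (hc : 2 * c < iteratedDeriv 2 F 0) :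
    ∃ δ > 0, ∀ t, |t| ≤ δ → c * t ^ 2 ≤ F t := by
  obtain ⟨δ, hδ, hnear⟩ := Metric.eventually_nhds_iff.mp
    (((hF.continuous_iteratedDeriv 2 le_rfl).tendsto 0).eventually (lt_mem_nhds hc))
  refine ⟨δ / 2, half_pos hδ, fun t ht => ?_⟩
  refine mul_sq_le_of_forall_abs_le_iteratedDeriv_two hF hF0
    (IsLocalMin.deriv_eq_zero (Filter.Eventually.of_forall hmin)) (fun s hs => ?_) ht
  exact (hnear (by rw [Real.dist_eq, sub_zero]; linarith)).le

lemma integral_deriv_sq_eq_neg_integral_mul_iteratedDeriv_two {u : ℝ → ℝ} (hu : ContDiff ℝ 2 u)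
    {a b : ℝ} (ha : deriv u a = 0) (hb : deriv u b = 0) :
    ∫ x in a..b, deriv u x ^ 2 = -∫ x in a..b, u x * iteratedDeriv 2 u x := by
  have hu' : ContDiff ℝ 1 (deriv u) := hu.deriv'
  have hu'' := hu.continuous_iteratedDeriv 2 le_rfl
  have hparts : ∫ x in a..b, (deriv u x * deriv u x + u x * iteratedDeriv 2 u x) = 0 := by
    rw [integral_deriv_mul_eq_sub (fun x _ => (hu.differentiable two_ne_zero x).hasDerivAt)
      (fun x _ => by
        rw [iteratedDeriv_succ, iteratedDeriv_one]
        exact (hu'.differentiable one_ne_zero x).hasDerivAt)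
      (hu'.continuous.intervalIntegrable _ _) (hu''.intervalIntegrable _ _), ha, hb]
    ring
  rw [integral_add (f := fun x => deriv u x * deriv u x) (g := fun x => u x * iteratedDeriv 2 u x)
    ((hu'.continuous.mul hu'.continuous).intervalIntegrable _ _)
    ((hu.continuous.mul hu'').intervalIntegrable _ _)] at hparts
  simp only [← sq] at hparts
  linarith

lemma integral_deriv_sq_le {u : ℝ → ℝ} (hu : ContDiff ℝ 2 u) {a b : ℝ} (hab : a ≤ b)
    (ha : deriv u a = 0) (hb : deriv u b = 0) {l : ℝ} (hl : 0 < l) :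
    ∫ x in a..b, deriv u x ^ 2
      ≤ l * (∫ x in a..b, u x ^ 2) + (4 * l)⁻¹ * ∫ x in a..b, iteratedDeriv 2 u x ^ 2 := by
  have hu'' := hu.continuous_iteratedDeriv 2 le_rfl
  have hpointwise : ∀ x, -(u x * iteratedDeriv 2 u x)
      ≤ l * u x ^ 2 + (4 * l)⁻¹ * iteratedDeriv 2 u x ^ 2 := fun x => by
    have hsq : l * u x ^ 2 + (4 * l)⁻¹ * iteratedDeriv 2 u x ^ 2 + u x * iteratedDeriv 2 u x
        = (2 * l * u x + iteratedDeriv 2 u x) ^ 2 / (4 * l) := by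
      field_simp; ring
    have : 0 ≤ (2 * l * u x + iteratedDeriv 2 u x) ^ 2 / (4 * l) := by positivity
    linarith
  calc ∫ x in a..b, deriv u x ^ 2 = ∫ x in a..b, -(u x * iteratedDeriv 2 u x) := by
        rw [integral_deriv_sq_eq_neg_integral_mul_iteratedDeriv_two hu ha hb,
          intervalIntegral.integral_neg]
    _ ≤ ∫ x in a..b, (l * u x ^ 2 + (4 * l)⁻¹ * iteratedDeriv 2 u x ^ 2) :=
        integral_mono_on hab ((hu.continuous.mul hu'').neg.intervalIntegrable _ _)
          (Continuous.intervalIntegrable (by fun_prop) _ _) fun x _ => hpointwise x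
    _ = _ := by
        rw [integral_add (Continuous.intervalIntegrable (by fun_prop) _ _)
          (Continuous.intervalIntegrable (by fun_prop) _ _), intervalIntegral.integral_const_mul,
          intervalIntegral.integral_const_mul]

lemma sq_le_integral_div_add_integral {u : ℝ → ℝ} (hu : ContDiff ℝ 1 u) {T : ℝ} (hT : 0 < T)
    {x : ℝ} (hx : x ∈ Icc 0 T) :
    u x ^ 2 ≤ (∫ t in 0..T, u t ^ 2) / T + ∫ t in 0..T, (u t ^ 2 + deriv u t ^ 2) := by
  have hu' : Continuous (deriv u) := hu.continuous_deriv le_rfl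
  obtain ⟨y, hy, hymin⟩ := isCompact_Icc.exists_isMinOn (nonempty_Icc.2 hT.le)
    (hu.continuous.pow 2).continuousOn
  have hmean : u y ^ 2 ≤ (∫ t in 0..T, u t ^ 2) / T := by
    rw [le_div_iff₀ hT]
    simpa [mul_comm] using integral_mono_on hT.le
      (_root_.intervalIntegrable_const (μ := MeasureTheory.volume))
      ((hu.continuous.pow 2).intervalIntegrable _ _) fun t ht => hymin ht
  have hftc : u x ^ 2 - u y ^ 2 = ∫ t in y..x, 2 * u t * deriv u t := by
    have hderiv : ∀ t, HasDerivAt (fun s => u s ^ 2) (2 * u t * deriv u t) t := fun t => by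
      simpa using (hu.differentiable one_ne_zero t).hasDerivAt.fun_pow 2
    exact (integral_eq_sub_of_hasDerivAt (fun t _ => hderiv t)
      (Continuous.intervalIntegrable (by fun_prop) _ _)).symm
  have hpiece : ∫ t in y..x, 2 * u t * deriv u t
      ≤ ∫ t in 0..T, (u t ^ 2 + deriv u t ^ 2) := calc
    _ ≤ ∫ t in Ι y x, ‖2 * u t * deriv u t‖ :=
      (Real.le_norm_self _).trans norm_integral_le_integral_norm_uIoc
    _ ≤ ∫ t in Ι 0 T, ‖2 * u t * deriv u t‖ := by
      refine MeasureTheory.setIntegral_mono_set ?_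
        (Filter.Eventually.of_forall fun t => norm_nonneg _)
        (Filter.Eventually.of_forall (uIoc_subset_uIoc_of_uIcc_subset_uIcc
          (uIcc_subset_uIcc (Icc_subset_uIcc hy) (Icc_subset_uIcc hx))))
      exact ((((continuous_const.mul hu.continuous).mul hu').norm).integrableOn_Icc).mono_set
        (by rw [uIoc_of_le hT.le]; exact Ioc_subset_Icc_self)
    _ ≤ ∫ t in 0..T, (u t ^ 2 + deriv u t ^ 2) := by
      rw [uIoc_of_le hT.le, ← integral_of_le hT.le]
      refine integral_mono_on hT.le (Continuous.intervalIntegrable (by fun_prop) _ _)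
        (Continuous.intervalIntegrable (by fun_prop) _ _) fun t _ => ?_
      rw [Real.norm_eq_abs, abs_mul, abs_mul, abs_two]
      nlinarith [sq_abs (u t), sq_abs (deriv u t), sq_nonneg (|u t| - |deriv u t|)]
  linarith

lemma sq_le_mul_integral_of_deriv_eq_zero {u : ℝ → ℝ} (hu : ContDiff ℝ 2 u) {T : ℝ} (hT : 0 < T)
    (h0 : deriv u 0 = 0) (hT' : deriv u T = 0) {x : ℝ} (hx : x ∈ Icc 0 T) :
    u x ^ 2 ≤ (T⁻¹ + 2) * ∫ t in 0..T, (iteratedDeriv 2 u t ^ 2 + u t ^ 2) := by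
  have hu'' := hu.continuous_iteratedDeriv 2 le_rfl
  have hu' : Continuous (deriv u) := hu.continuous_deriv (by norm_num)
  have hpoint := sq_le_integral_div_add_integral (hu.of_le (by norm_num)) hT hx
  have hderiv := integral_deriv_sq_le hu hT.le h0 hT' one_pos
  rw [integral_add (Continuous.intervalIntegrable (by fun_prop) _ _)
    (Continuous.intervalIntegrable (by fun_prop) _ _)] at hpoint
  rw [integral_add (Continuous.intervalIntegrable (by fun_prop) _ _)
    (Continuous.intervalIntegrable (by fun_prop) _ _)]
  have hA : 0 ≤ ∫ t in 0..T, iteratedDeriv 2 u t ^ 2 :=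
    integral_nonneg hT.le fun t _ => sq_nonneg _
  have hAT : 0 ≤ T⁻¹ * ∫ t in 0..T, iteratedDeriv 2 u t ^ 2 := by positivity
  rw [div_eq_inv_mul] at hpoint
  norm_num at hderiv
  linarith

lemma mul_integral_add_mul_integral_le_integral {F u : ℝ → ℝ} (hF : Continuous F)
    (hu : ContDiff ℝ 2 u) {T : ℝ} (hT : 0 ≤ T) (h0 : deriv u 0 = 0) (hT' : deriv u T = 0)
    {b q c l : ℝ} (hl : 0 < l) (hb : 0 ≤ b) (hq : q ≤ b)
    (hFu : ∀ x ∈ Icc 0 T, c * u x ^ 2 ≤ F (u x)) :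
    (1 / 2 - b / (8 * l)) * (∫ x in 0..T, iteratedDeriv 2 u x ^ 2)
        + (c - b * l / 2) * ∫ x in 0..T, u x ^ 2
      ≤ ∫ x in 0..T, (iteratedDeriv 2 u x ^ 2 / 2 - q * deriv u x ^ 2 / 2 + F (u x)) := by
  have hu'' := hu.continuous_iteratedDeriv 2 le_rfl
  have hu' : Continuous (deriv u) := hu.continuous_deriv (by norm_num)
  rw [integral_add (Continuous.intervalIntegrable (by fun_prop) _ _)
      (Continuous.intervalIntegrable (by fun_prop) _ _),
    integral_sub (Continuous.intervalIntegrable (by fun_prop) _ _)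
      (Continuous.intervalIntegrable (by fun_prop) _ _),
    intervalIntegral.integral_div, intervalIntegral.integral_div,
    intervalIntegral.integral_const_mul]
  have hI : 0 ≤ ∫ x in 0..T, deriv u x ^ 2 := integral_nonneg hT fun x _ => sq_nonneg _
  have hqI : q * ∫ x in 0..T, deriv u x ^ 2
      ≤ b * (l * (∫ x in 0..T, u x ^ 2) + (4 * l)⁻¹ * ∫ x in 0..T, iteratedDeriv 2 u x ^ 2) :=
    (mul_le_mul_of_nonneg_right hq hI).trans
      (mul_le_mul_of_nonneg_left (integral_deriv_sq_le hu hT h0 hT' hl) hb)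
  have hFint : c * ∫ x in 0..T, u x ^ 2 ≤ ∫ x in 0..T, F (u x) := by
    rw [← intervalIntegral.integral_const_mul]
    exact integral_mono_on hT (Continuous.intervalIntegrable (by fun_prop) _ _)
      (Continuous.intervalIntegrable (by fun_prop) _ _) hFu
  have hcoef : b / (8 * l) = b * (4 * l)⁻¹ / 2 := by field_simp; ring
  rw [hcoef]
  linarith

/-- Let `F` be `C²` with `0 = F(0) = min F` and `F''(0) > 0`. For any
`0 ≤ b < 2√(F''(0))` and any `T > 0`, there exist `ε > 0` and `θ > 0` such that for every
`q ≤ b` and every `C²` function `u` with `u'(0) = u'(T) = 0` and `‖u‖²_{H_T} ≤ ε²`,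
one has `J_q(u) ≥ θ·‖u‖²_{H_T}`, where `‖u‖²_{H_T} = ∫₀ᵀ (u''² + u²)`. -/
theorem stmt11 (F : ℝ → ℝ) (hF : ContDiff ℝ 2 F)
    (hF0 : F 0 = 0) (hmin : ∀ t : ℝ, F 0 ≤ F t)
    (hF'' : 0 < iteratedDeriv 2 F 0)
    (b T : ℝ) (hb0 : 0 ≤ b) (hb : b < 2 * Real.sqrt (iteratedDeriv 2 F 0)) (hT : 0 < T) :
    ∃ ε > (0:ℝ), ∃ θ > (0:ℝ), ∀ q : ℝ, q ≤ b →
      ∀ u : ℝ → ℝ, ContDiff ℝ 2 u → deriv u 0 = 0 → deriv u T = 0 →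
        (∫ x in (0:ℝ)..T, ((iteratedDeriv 2 u x) ^ 2 + (u x) ^ 2)) ≤ ε ^ 2 →
        (∫ x in (0:ℝ)..T,
            ((iteratedDeriv 2 u x) ^ 2 / 2 - q * (deriv u x) ^ 2 / 2 + F (u x)))
          ≥ θ * ∫ x in (0:ℝ)..T, ((iteratedDeriv 2 u x) ^ 2 + (u x) ^ 2) := by
  set M := iteratedDeriv 2 F 0
  -- `b / 4 < l < √M / 2`: the first makes both coefficients below positive, the second `4 l² < M`
  set l := (b + 2 * √M) / 8 with hl_def
  have hl : 0 < l := by positivity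
  have hbl : b < 4 * l := by linarith
  have hlM : 2 * (2 * l ^ 2) < M := by
    nlinarith [Real.sq_sqrt hF''.le, mul_pos (sub_pos.2 hb) (by positivity : 0 < 6 * √M + b)]
  obtain ⟨δ, hδ, hFquad⟩ := exists_mul_sq_le_of_lt_iteratedDeriv_two hF hF0 hmin hlM
  have hK : 0 < T⁻¹ + 2 := by positivity
  refine ⟨δ / √(T⁻¹ + 2), by positivity, min (1 / 2 - b / (8 * l)) (2 * l ^ 2 - b * l / 2),
    lt_min (by rw [sub_pos, div_lt_iff₀ (by positivity)]; linarith) (by nlinarith),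
    fun q hq u hu h0 hT' hsmall => ?_⟩
  have hsup : ∀ x ∈ Icc 0 T, |u x| ≤ δ := fun x hx => by
    refine abs_le_of_sq_le_sq
      ((sq_le_mul_integral_of_deriv_eq_zero hu hT h0 hT' hx).trans ?_) hδ.le
    calc _ ≤ (T⁻¹ + 2) * (δ / √(T⁻¹ + 2)) ^ 2 := mul_le_mul_of_nonneg_left hsmall hK.le
      _ = δ ^ 2 := by rw [div_pow, Real.sq_sqrt hK.le]; field_simp
  have hA : 0 ≤ ∫ x in 0..T, iteratedDeriv 2 u x ^ 2 :=
    integral_nonneg hT.le fun _ _ => sq_nonneg _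
  have hB : 0 ≤ ∫ x in 0..T, u x ^ 2 := integral_nonneg hT.le fun _ _ => sq_nonneg _
  rw [ge_iff_le, integral_add (Continuous.intervalIntegrable (by fun_prop) _ _)
    (Continuous.intervalIntegrable (by fun_prop) _ _), mul_add]
  exact (add_le_add (mul_le_mul_of_nonneg_right (min_le_left _ _) hA)
    (mul_le_mul_of_nonneg_right (min_le_right _ _) hB)).trans
      (mul_integral_add_mul_integral_le_integral hF.continuous hu hT.le h0 hT' hl hb0 hq
        fun x hx => hFquad _ (hsup x hx))
end

section
/- Let F : ℝ → ℝ be of class C² with 0 = F(0) = min_{t∈ℝ} F(t), and set α := limsup_{t→−∞} F(t)/t², assumed finite. Let a > 0 satisfy a² > 24α, and let T > 0 satisfy (a − √(a² − 24α))/2 < π²/T² < (a + √(a² − 24α))/2. Then there exists a smooth function ũ : [0,T] → ℝ with ũ'(0) = ũ'(T) = 0 such that J_q(ũ) < 0 for every q ≥ a. -/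
open Filter Real intervalIntegral

private lemma cont_trig (A B D E c : ℝ) :
    Continuous (fun x : ℝ => A * Real.cos (c*x)^2 + B * Real.sin (c*x)^2 + D * Real.cos (c*x) + E) := by
  fun_prop

private lemma key_integral (T : ℝ) (hT : 0 < T) (A B D E : ℝ) :
    (∫ x in (0:ℝ)..T, (A * Real.cos (π/T*x)^2 + B * Real.sin (π/T*x)^2
      + D * Real.cos (π/T*x) + E))
      = A*(T/2) + B*(T/2) + E*T := by
  set c : ℝ := π / T with hc_def
  have hc : c ≠ 0 := by
    have : 0 < c := div_pos Real.pi_pos hT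
    exact this.ne'
  have hcT : c * T = π := div_mul_cancel₀ π hT.ne'
  have hinv : c⁻¹ = T / π := by
    rw [hc_def, inv_div]
  have Icos2 : (∫ x in (0:ℝ)..T, Real.cos (c*x)^2) = T/2 := by
    rw [intervalIntegral.integral_comp_mul_left (fun y => Real.cos y ^ 2) hc]
    rw [mul_zero, hcT, integral_cos_sq]
    simp [hinv, smul_eq_mul]
    field_simp
  have Isin2 : (∫ x in (0:ℝ)..T, Real.sin (c*x)^2) = T/2 := by
    rw [intervalIntegral.integral_comp_mul_left (fun y => Real.sin y ^ 2) hc]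
    rw [mul_zero, hcT, integral_sin_sq]
    simp [hinv, smul_eq_mul]
    field_simp
  have Icos1 : (∫ x in (0:ℝ)..T, Real.cos (c*x)) = 0 := by
    rw [intervalIntegral.integral_comp_mul_left (fun y => Real.cos y) hc]
    rw [mul_zero, hcT, integral_cos]
    simp
  have i1 : IntervalIntegrable (fun x : ℝ => A * Real.cos (c*x)^2) MeasureTheory.volume 0 T :=
    (Continuous.intervalIntegrable (by fun_prop) _ _)
  have i2 : IntervalIntegrable (fun x : ℝ => B * Real.sin (c*x)^2) MeasureTheory.volume 0 T :=
    (Continuous.intervalIntegrable (by fun_prop) _ _)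
  have i3 : IntervalIntegrable (fun x : ℝ => D * Real.cos (c*x)) MeasureTheory.volume 0 T :=
    (Continuous.intervalIntegrable (by fun_prop) _ _)
  have i4 : IntervalIntegrable (fun _ : ℝ => E) MeasureTheory.volume 0 T :=
    (Continuous.intervalIntegrable (by fun_prop) _ _)
  rw [intervalIntegral.integral_add ((i1.add i2).add i3) i4]
  rw [intervalIntegral.integral_add (i1.add i2) i3]
  rw [intervalIntegral.integral_add i1 i2]
  rw [intervalIntegral.integral_const_mul, intervalIntegral.integral_const_mul,
    intervalIntegral.integral_const_mul, intervalIntegral.integral_const,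
    Icos2, Isin2, Icos1]
  rw [smul_eq_mul]
  ring

set_option maxHeartbeats 1000000 in
/-- Let `F` be `C²` with `0 = F(0) = min F`, and let
`α := limsup_{t→−∞} F(t)/t²` (assumed finite, i.e. the quotient is eventually bounded
above at `−∞`). Let `a > 0` with `a² > 24α` and let `T > 0` satisfy
`(a − √(a² − 24α))/2 < π²/T² < (a + √(a² − 24α))/2`. Then there is a smooth `ũ` with
`ũ'(0) = ũ'(T) = 0` and `J_q(ũ) < 0` for every `q ≥ a`. -/
theorem stmt12 (F : ℝ → ℝ) (hF : ContDiff ℝ 2 F)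
    (hF0 : F 0 = 0) (hmin : ∀ t : ℝ, F 0 ≤ F t)
    (α : ℝ)
    (hbdd : Filter.IsBoundedUnder (· ≤ ·) Filter.atBot (fun t : ℝ => F t / t ^ 2))
    (hα : Filter.limsup (fun t : ℝ => F t / t ^ 2) Filter.atBot = α)
    (a : ℝ) (ha : 0 < a) (ha2 : 24 * α < a ^ 2)
    (T : ℝ) (hT : 0 < T)
    (hT1 : (a - Real.sqrt (a ^ 2 - 24 * α)) / 2 < π ^ 2 / T ^ 2)
    (hT2 : π ^ 2 / T ^ 2 < (a + Real.sqrt (a ^ 2 - 24 * α)) / 2) :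
    ∃ u : ℝ → ℝ, ContDiff ℝ (⊤ : ℕ∞) u ∧ deriv u 0 = 0 ∧ deriv u T = 0 ∧
      ∀ q : ℝ, a ≤ q →
        (∫ x in (0:ℝ)..T,
          ((iteratedDeriv 2 u x) ^ 2 / 2 - q * (deriv u x) ^ 2 / 2 + F (u x))) < 0 := by
  -- nonnegativity of F and α
  have hFnn : ∀ t, 0 ≤ F t := fun t => hF0 ▸ hmin t
  have hα0 : 0 ≤ α := by
    rw [← hα]
    refine Filter.le_limsup_of_frequently_le ?_ hbdd
    refine Filter.Eventually.frequently ?_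
    filter_upwards [Filter.eventually_lt_atBot (0:ℝ)] with t ht
    exact div_nonneg (hFnn t) (sq_nonneg t)
  set c : ℝ := π / T with hc_def
  have hc : 0 < c := div_pos Real.pi_pos hT
  set L : ℝ := π ^ 2 / T ^ 2 with hL_def
  have hLc : L = c ^ 2 := by rw [hL_def, hc_def, div_pow]
  have hL : 0 < L := by rw [hLc]; positivity
  -- the quadratic inequality
  have hs : Real.sqrt (a ^ 2 - 24 * α) ^ 2 = a ^ 2 - 24 * α :=
    Real.sq_sqrt (by linarith)
  have hquad : L ^ 2 - a * L + 6 * α < 0 := by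
    have h1 : 0 < L - (a - Real.sqrt (a ^ 2 - 24 * α)) / 2 := by linarith
    have h2 : 0 < (a + Real.sqrt (a ^ 2 - 24 * α)) / 2 - L := by linarith
    nlinarith [mul_pos h1 h2]
  set δ : ℝ := a * L - L ^ 2 - 6 * α with hδ_def
  have hδ : 0 < δ := by rw [hδ_def]; linarith
  set ε : ℝ := δ / 12 with hε_def
  have hε : 0 < ε := by positivity
  -- eventual bound at -∞
  have hev : ∀ᶠ t in Filter.atBot, F t / t ^ 2 < α + ε :=
    Filter.eventually_lt_of_limsup_lt (by rw [hα]; linarith) hbdd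
  obtain ⟨M, hM⟩ := Filter.eventually_atBot.mp hev
  set M' : ℝ := min M (-1) with hM'_def
  have hM'0 : M' ≤ 0 := le_trans (min_le_right _ _) (by norm_num)
  have hMbd : ∀ t ≤ M', F t ≤ (α + ε) * t ^ 2 := by
    intro t ht
    have ht2 : (0:ℝ) < t ^ 2 := by
      have : t ≤ -1 := le_trans ht (min_le_right _ _)
      nlinarith
    have := hM t (le_trans ht (min_le_left _ _))
    calc F t = F t / t ^ 2 * t ^ 2 := by rw [div_mul_cancel₀ _ ht2.ne']
      _ ≤ (α + ε) * t ^ 2 := by nlinarith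
  -- max of F on [M', 0]
  obtain ⟨z, hz, hzmax⟩ := (isCompact_Icc : IsCompact (Set.Icc M' 0)).exists_isMaxOn
    ⟨M', le_refl M', hM'0⟩ (hF.continuous.continuousOn)
  set C : ℝ := max (F z) 0 with hC_def
  have hC0 : 0 ≤ C := le_max_right _ _
  have hFb : ∀ t ≤ 0, F t ≤ (α + ε) * t ^ 2 + C := by
    intro t ht
    by_cases htM : t ≤ M'
    · linarith [hMbd t htM]
    · push_neg at htM
      have : F t ≤ F z := hzmax ⟨htM.le, ht⟩
      have h2 : 0 ≤ (α + ε) * t ^ 2 := mul_nonneg (by linarith) (sq_nonneg t)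
      have : F t ≤ C := le_trans this (le_max_left _ _)
      linarith
  -- choose amplitude R
  set R : ℝ := Real.sqrt (8 * C / δ) + 1 with hR_def
  have hRs : Real.sqrt (8 * C / δ) ^ 2 = 8 * C / δ :=
    Real.sq_sqrt (by positivity)
  have hR0 : 0 < R := by
    have := Real.sqrt_nonneg (8 * C / δ); rw [hR_def]; linarith
  have hR2 : 8 * C / δ < R ^ 2 := by
    have h := Real.sqrt_nonneg (8 * C / δ)
    rw [hR_def]; nlinarith
  -- the test function
  set u : ℝ → ℝ := fun x => -R - R * Real.cos (c * x) with hu_def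
  have hune : ∀ x, u x ≤ 0 := by
    intro x
    have := Real.neg_one_le_cos (c * x)
    have : -1 ≤ Real.cos (c * x) := this
    rw [hu_def]; dsimp only; nlinarith
  have hd1 : ∀ x, HasDerivAt u (R * c * Real.sin (c * x)) x := by
    intro x
    have h0 : HasDerivAt (fun y : ℝ => c * y) (c * 1) x := (hasDerivAt_id x).const_mul c
    have h1 : HasDerivAt (fun y : ℝ => Real.cos (c * y)) (-Real.sin (c * x) * (c * 1)) x := h0.cos
    have h2 : HasDerivAt u (0 - R * (-Real.sin (c * x) * (c * 1))) x :=
      (hasDerivAt_const x (-R)).sub (h1.const_mul R)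
    convert h2 using 1; ring
  have hd2 : ∀ x, HasDerivAt (fun y => R * c * Real.sin (c * y)) (R * c ^ 2 * Real.cos (c * x)) x := by
    intro x
    have h0 : HasDerivAt (fun y : ℝ => c * y) (c * 1) x := (hasDerivAt_id x).const_mul c
    have h1 : HasDerivAt (fun y : ℝ => Real.sin (c * y)) (Real.cos (c * x) * (c * 1)) x := h0.sin
    have h2 := h1.const_mul (R * c)
    exact h2.congr_deriv (by ring)
  have hderiv : deriv u = fun x => R * c * Real.sin (c * x) := funext fun x => (hd1 x).deriv
  have h2d : ∀ x, iteratedDeriv 2 u x = R * c ^ 2 * Real.cos (c * x) := by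
    intro x
    rw [show (2:ℕ) = 1 + 1 from rfl, iteratedDeriv_succ, iteratedDeriv_one, hderiv]
    exact (hd2 x).deriv
  have hsmooth : ContDiff ℝ (⊤ : ℕ∞) u := by
    rw [hu_def]
    exact ContDiff.sub contDiff_const
      (contDiff_const.mul ((contDiff_const.mul contDiff_id).cos))
  refine ⟨u, hsmooth, ?_, ?_, ?_⟩
  · rw [hderiv]; simp
  · rw [hderiv]
    have : c * T = π := div_mul_cancel₀ π hT.ne'
    simp [this]
  intro q hq
  -- rewrite the integrand
  have hfun : (fun x => (iteratedDeriv 2 u x) ^ 2 / 2 - q * (deriv u x) ^ 2 / 2 + F (u x))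
      = fun x => ((R * c ^ 2 * Real.cos (c * x)) ^ 2 / 2
          - q * (R * c * Real.sin (c * x)) ^ 2 / 2 + F (u x)) := by
    funext x; rw [h2d, hderiv]
  rw [hfun]
  -- split the integral
  have ig : Continuous (fun x : ℝ => (R * c ^ 2 * Real.cos (c * x)) ^ 2 / 2
      - q * (R * c * Real.sin (c * x)) ^ 2 / 2) := by fun_prop
  have iFu : Continuous (fun x : ℝ => F (u x)) :=
    hF.continuous.comp (hsmooth.continuous)
  have igI : IntervalIntegrable (fun x : ℝ => (R * c ^ 2 * Real.cos (c * x)) ^ 2 / 2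
      - q * (R * c * Real.sin (c * x)) ^ 2 / 2) MeasureTheory.volume 0 T :=
    ig.intervalIntegrable 0 T
  have iFuI : IntervalIntegrable (fun x : ℝ => F (u x)) MeasureTheory.volume 0 T :=
    iFu.intervalIntegrable 0 T
  rw [intervalIntegral.integral_add igI iFuI]
  -- bound the F part
  have hFle : (∫ x in (0:ℝ)..T, F (u x))
      ≤ (α + ε) * R ^ 2 * (3 * T / 2) + C * T := by
    have hb : ∀ x ∈ Set.Icc (0:ℝ) T, F (u x) ≤
        ((α+ε)*R^2) * Real.cos (c*x)^2 + 0 * Real.sin (c*x)^2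
          + (2*(α+ε)*R^2) * Real.cos (c*x) + ((α+ε)*R^2 + C) := by
      intro x _
      have h1 := hFb (u x) (hune x)
      have h2 : (u x) ^ 2 = R^2 + 2*R^2*Real.cos (c*x) + R^2 * Real.cos (c*x)^2 := by
        rw [hu_def]; ring
      calc F (u x) ≤ (α + ε) * (u x) ^ 2 + C := h1
        _ = ((α+ε)*R^2) * Real.cos (c*x)^2 + 0 * Real.sin (c*x)^2
          + (2*(α+ε)*R^2) * Real.cos (c*x) + ((α+ε)*R^2 + C) := by rw [h2]; ring
    have hmono := intervalIntegral.integral_mono_on hT.le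
      (iFu.intervalIntegrable 0 T : IntervalIntegrable _ MeasureTheory.volume 0 T)
      ((cont_trig ((α+ε)*R^2) 0 (2*(α+ε)*R^2) ((α+ε)*R^2 + C) c).intervalIntegrable 0 T) hb
    calc (∫ x in (0:ℝ)..T, F (u x)) ≤ _ := hmono
      _ = ((α+ε)*R^2)*(T/2) + 0*(T/2) + ((α+ε)*R^2 + C)*T := key_integral T hT _ _ _ _
      _ = (α + ε) * R ^ 2 * (3 * T / 2) + C * T := by ring
  -- compute the quadratic part
  have hg : (∫ x in (0:ℝ)..T, ((R * c ^ 2 * Real.cos (c * x)) ^ 2 / 2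
      - q * (R * c * Real.sin (c * x)) ^ 2 / 2))
      = (R^2*c^4/2) * (T/2) - (q*R^2*c^2/2) * (T/2) := by
    have hfun2 : (fun x : ℝ => (R * c ^ 2 * Real.cos (c * x)) ^ 2 / 2
        - q * (R * c * Real.sin (c * x)) ^ 2 / 2)
        = fun x => (R^2*c^4/2) * Real.cos (c*x)^2 + (-(q*R^2*c^2/2)) * Real.sin (c*x)^2
          + 0 * Real.cos (c*x) + 0 := by
      funext x; ring
    rw [hfun2, key_integral T hT]
    ring
  rw [hg]
  -- final arithmetic
  have hfinal : (R^2*c^4/2) * (T/2) - (q*R^2*c^2/2) * (T/2)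
      + ((α + ε) * R ^ 2 * (3 * T / 2) + C * T) < 0 := by
    have hc2 : c ^ 2 = L := hLc.symm
    have hc4 : c ^ 4 = L ^ 2 := by rw [← hc2]; ring
    rw [hc4, hc2]
    have hqL : a * L ≤ q * L := mul_le_mul_of_nonneg_right hq hL.le
    have hRT : (0:ℝ) ≤ R ^ 2 * T / 4 := by positivity
    have hstep : R^2*T/4*(a*L) ≤ R^2*T/4*(q*L) := mul_le_mul_of_nonneg_left hqL hRT
    have hCd : 8 * C < δ * R ^ 2 := by
      have := (div_lt_iff₀ hδ).mp hR2
      linarith [this]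
    have hlast : 8*C*T < δ*R^2*T := mul_lt_mul_of_pos_right hCd hT
    have hid : R^2*L^2/2*(T/2) - q*R^2*L/2*(T/2) + ((α + ε) * R ^ 2 * (3 * T / 2) + C*T)
        = -(δ*R^2*T)/8 + C*T + (R^2*T/4*(a*L) - R^2*T/4*(q*L)) := by
      rw [hε_def, hδ_def]; ring
    rw [hid]
    clear_value δ ε C R L
    linarith [hstep, hlast]
  linarith [hFle, hfinal]
end

section
/- Let F : ℝ → ℝ be of class C² with F(0) = F'(0) = 0 and F''(0) ≥ 0. Then for any q > 2√(F''(0)) and any T > 0 satisfying (q − √(q² − 4F''(0)))/2 < π²/T² < (q + √(q² − 4F''(0)))/2, there exists a C² function u : [0,T] → ℝ with u'(0) = u'(T) = 0 such that J_q(u) < 0; in particular inf{ J_q(u) : u ∈ A_T } < 0. -/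
/-!
The test function `u(x) = ε cos(ω x)` with `ω = π / T` satisfies `u'(0) = u'(T) = 0`, and since
`cos²(ω ·)` and `sin²(ω ·)` both average to `1/2` over `[0, T]`, Taylor's theorem for `F` at `0`
gives `J_q(u) ≤ ε² T / 4 · (ω⁴ - q ω² + F''(0) + 2δ)` once `ε` is small enough for the error
`δ t²` of the quadratic approximation. The hypothesis on `T` says that `ω² = π² / T²` lies strictly
between the roots of `λ² - q λ + F''(0)`, so this bound is negative for small `δ`.
-/

open Real intervalIntegral Filter Topology

theorem taylorWithinEval_two_univ (F : ℝ → ℝ) (x₀ x : ℝ) :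
    taylorWithinEval F 2 Set.univ x₀ x =
      F x₀ + deriv F x₀ * (x - x₀) + iteratedDeriv 2 F x₀ / 2 * (x - x₀) ^ 2 := by
  simp only [taylor_within_apply, Finset.sum_range_succ, Finset.sum_range_zero,
    iteratedDerivWithin_univ, iteratedDeriv_zero, iteratedDeriv_one, Nat.factorial_two,
    Nat.factorial_one, Nat.factorial_zero, smul_eq_mul]
  push_cast
  ring

theorem ContDiff.eventually_le_of_deriv_eq_zero {F : ℝ → ℝ} (hF : ContDiff ℝ 2 F)
    (hF0 : F 0 = 0) (hF1 : deriv F 0 = 0) {δ : ℝ} (hδ : 0 < δ) :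
    ∀ᶠ t in 𝓝 0, F t ≤ (iteratedDeriv 2 F 0 / 2 + δ) * t ^ 2 := by
  filter_upwards [(taylor_isLittleO_univ (x₀ := 0) hF).def hδ] with t ht
  simp only [taylorWithinEval_two_univ, hF0, hF1, sub_zero, Real.norm_eq_abs] at ht
  rw [abs_of_nonneg (sq_nonneg t)] at ht
  linarith [le_abs_self (F t - (0 + 0 * t + iteratedDeriv 2 F 0 / 2 * t ^ 2))]

theorem sq_sub_mul_add_neg_of_mem_roots {q c l : ℝ}
    (hlo : (q - √(q ^ 2 - 4 * c)) / 2 < l) (hhi : l < (q + √(q ^ 2 - 4 * c)) / 2) :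
    l ^ 2 - q * l + c < 0 := by
  have hpos : 0 < q ^ 2 - 4 * c := Real.sqrt_pos.1 (by linarith)
  nlinarith [Real.sq_sqrt hpos.le]

noncomputable def cosMode (ε ω : ℝ) (x : ℝ) : ℝ := ε * cos (ω * x)

theorem contDiff_cosMode (ε ω : ℝ) : ContDiff ℝ 2 (cosMode ε ω) := by
  unfold cosMode
  fun_prop

theorem deriv_cosMode (ε ω : ℝ) : deriv (cosMode ε ω) = fun x => -(ε * ω) * sin (ω * x) := by
  ext x
  exact ((((hasDerivAt_id x).const_mul ω).cos).const_mul ε).deriv.trans (by simp; ring)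

theorem iteratedDeriv_two_cosMode (ε ω : ℝ) :
    iteratedDeriv 2 (cosMode ε ω) = fun x => -(ε * ω ^ 2) * cos (ω * x) := by
  ext x
  rw [iteratedDeriv_succ, iteratedDeriv_one, deriv_cosMode]
  exact ((((hasDerivAt_id x).const_mul ω).sin).const_mul _).deriv.trans (by simp; ring)

theorem integral_cos_sq_of_mul_eq_pi {ω T : ℝ} (hωT : ω * T = π) :
    ∫ x in (0:ℝ)..T, cos (ω * x) ^ 2 = T / 2 := by
  have hω : ω ≠ 0 := by rintro rfl; simp [pi_ne_zero.symm] at hωT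
  rw [integral_comp_mul_left (fun y => cos y ^ 2) hω, mul_zero, hωT, integral_cos_sq]
  simp only [cos_pi, sin_pi, mul_zero, cos_zero, sin_zero, sub_self, zero_add, sub_zero,
    smul_eq_mul]
  rw [← hωT]
  field_simp

theorem integral_sin_sq_of_mul_eq_pi {ω T : ℝ} (hωT : ω * T = π) :
    ∫ x in (0:ℝ)..T, sin (ω * x) ^ 2 = T / 2 := by
  have hω : ω ≠ 0 := by rintro rfl; simp [pi_ne_zero.symm] at hωT
  rw [integral_comp_mul_left (fun y => sin y ^ 2) hω, mul_zero, hωT, integral_sin_sq]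
  simp only [sin_zero, cos_zero, mul_one, sin_pi, cos_pi, mul_neg, neg_zero, sub_self, zero_add,
    sub_zero, smul_eq_mul]
  rw [← hωT]
  field_simp

noncomputable def energy (q : ℝ) (F u : ℝ → ℝ) (T : ℝ) : ℝ :=
  ∫ x in (0:ℝ)..T, ((iteratedDeriv 2 u x) ^ 2 / 2 - q * (deriv u x) ^ 2 / 2 + F (u x))

theorem energy_cosMode_le {F : ℝ → ℝ} (hF : Continuous F) (q : ℝ) {T ε ω K : ℝ} (hT : 0 < T)
    (hωT : ω * T = π) (hK : ∀ t, |t| ≤ |ε| → F t ≤ K * t ^ 2) :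
    energy q F (cosMode ε ω) T ≤ ε ^ 2 * T / 4 * (ω ^ 4 - q * ω ^ 2 + 2 * K) := by
  set A := ε ^ 2 * ω ^ 4 / 2 + K * ε ^ 2
  set B := q * ε ^ 2 * ω ^ 2 / 2
  have hcos : Continuous fun x => cos (ω * x) ^ 2 := by fun_prop
  have hsin : Continuous fun x => sin (ω * x) ^ 2 := by fun_prop
  have hbound : ∀ x, (iteratedDeriv 2 (cosMode ε ω) x) ^ 2 / 2
      - q * (deriv (cosMode ε ω) x) ^ 2 / 2 + F (cosMode ε ω x)
      ≤ A * cos (ω * x) ^ 2 - B * sin (ω * x) ^ 2 := by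
    intro x
    have hu : |cosMode ε ω x| ≤ |ε| := by
      rw [cosMode, abs_mul]
      exact mul_le_of_le_one_right (abs_nonneg ε) (abs_cos_le_one _)
    have hFu := hK _ hu
    simp only [iteratedDeriv_two_cosMode, deriv_cosMode, cosMode] at hFu ⊢
    linear_combination hFu
  calc energy q F (cosMode ε ω) T
      ≤ ∫ x in (0:ℝ)..T, (A * cos (ω * x) ^ 2 - B * sin (ω * x) ^ 2) := by
        refine integral_mono_on hT.le ?_ ((hcos.const_mul A).sub (hsin.const_mul B)
          |>.intervalIntegrable 0 T) fun x _ => hbound x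
        rw [iteratedDeriv_two_cosMode, deriv_cosMode]
        exact Continuous.intervalIntegrable (by unfold cosMode; fun_prop) 0 T
    _ = ε ^ 2 * T / 4 * (ω ^ 4 - q * ω ^ 2 + 2 * K) := by
        rw [integral_sub ((hcos.const_mul A).intervalIntegrable 0 T)
          ((hsin.const_mul B).intervalIntegrable 0 T), integral_const_mul, integral_const_mul,
          integral_cos_sq_of_mul_eq_pi hωT, integral_sin_sq_of_mul_eq_pi hωT]
        ring

theorem stmt13_general (F : ℝ → ℝ) (hF : ContDiff ℝ 2 F)
    (hF0 : F 0 = 0) (hF1 : deriv F 0 = 0)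
    (q : ℝ)
    (T : ℝ) (hT : 0 < T)
    (hT1 : (q - Real.sqrt (q ^ 2 - 4 * iteratedDeriv 2 F 0)) / 2 < π ^ 2 / T ^ 2)
    (hT2 : π ^ 2 / T ^ 2 < (q + Real.sqrt (q ^ 2 - 4 * iteratedDeriv 2 F 0)) / 2) :
    ∃ u : ℝ → ℝ, ContDiff ℝ 2 u ∧ deriv u 0 = 0 ∧ deriv u T = 0 ∧
      (∫ x in (0:ℝ)..T,
        ((iteratedDeriv 2 u x) ^ 2 / 2 - q * (deriv u x) ^ 2 / 2 + F (u x))) < 0 := by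
  set c := iteratedDeriv 2 F 0
  set ω := π / T
  set μ := ω ^ 4 - q * ω ^ 2 + c
  have hωT : ω * T = π := div_mul_cancel₀ π hT.ne'
  have hμ : μ < 0 := by
    have := sq_sub_mul_add_neg_of_mem_roots (q := q) (c := c) (l := ω ^ 2)
      (by rwa [div_pow]) (by rwa [div_pow])
    linear_combination this
  obtain ⟨r, hr, hFr⟩ := Metric.eventually_nhds_iff.1
    (hF.eventually_le_of_deriv_eq_zero hF0 hF1 (δ := -μ / 4) (by linarith))
  set ε := r / 2
  have hK : ∀ t, |t| ≤ |ε| → F t ≤ (c / 2 + -μ / 4) * t ^ 2 := fun t ht =>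
    hFr (by rw [Real.dist_eq, sub_zero]; rw [abs_of_pos (half_pos hr)] at ht; linarith)
  refine ⟨cosMode ε ω, contDiff_cosMode ε ω, by simp [deriv_cosMode],
    by simp [deriv_cosMode, hωT], ?_⟩
  calc energy q F (cosMode ε ω) T
      ≤ ε ^ 2 * T / 4 * (μ / 2) :=
        (energy_cosMode_le hF.continuous q hT hωT hK).trans_eq (by ring)
    _ < 0 := mul_neg_of_pos_of_neg (by positivity) (by linarith)

/-- Let `F` be `C²` with `F(0) = F'(0) = 0` and `F''(0) ≥ 0`. For any
`q > 2√(F''(0))` and any `T > 0` with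
`(q − √(q² − 4F''(0)))/2 < π²/T² < (q + √(q² − 4F''(0)))/2`, there exists a `C²`
function `u` with `u'(0) = u'(T) = 0` and `J_q(u) < 0`; in particular
`inf { J_q(u) : u ∈ A_T } < 0`. -/
theorem stmt13 (F : ℝ → ℝ) (hF : ContDiff ℝ 2 F)
    (hF0 : F 0 = 0) (hF1 : deriv F 0 = 0) (hF2 : 0 ≤ iteratedDeriv 2 F 0)
    (q : ℝ) (hq : 2 * Real.sqrt (iteratedDeriv 2 F 0) < q)
    (T : ℝ) (hT : 0 < T)
    (hT1 : (q - Real.sqrt (q ^ 2 - 4 * iteratedDeriv 2 F 0)) / 2 < π ^ 2 / T ^ 2)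
    (hT2 : π ^ 2 / T ^ 2 < (q + Real.sqrt (q ^ 2 - 4 * iteratedDeriv 2 F 0)) / 2) :
    ∃ u : ℝ → ℝ, ContDiff ℝ 2 u ∧ deriv u 0 = 0 ∧ deriv u T = 0 ∧
      (∫ x in (0:ℝ)..T,
        ((iteratedDeriv 2 u x) ^ 2 / 2 - q * (deriv u x) ^ 2 / 2 + F (u x))) < 0 :=
  stmt13_general F hF hF0 hF1 q T hT hT1 hT2
end

section
/- Let r > 2 and p ∈ ℝ. There is no bounded, four times continuously differentiable function u : ℝ → ℝ with u(x) > 0 for all x ∈ ℝ satisfying u'''' + p·u'' + |u|^{r−2}·u = 0 at every point of ℝ. (Any such u would make (u'' + p·u)'' = −|u|^{r−2}u < 0 everywhere, forcing the bounded function u'' + p·u to be concave, hence constant, a contradiction.) -/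
/-!
Put `v = u'' + p u`. For a positive solution, `v'' = -|u|^(r-2) u < 0`, so `v'` is strictly
decreasing and `v` tends to `-∞` at least linearly at one of the two ends of `ℝ`. As `p u` is
bounded, `u'' → -∞` at that end as well, and integrating twice gives `u → -∞` there, which
is incompatible with `u > 0`.
-/

open Filter

theorem ContDiff.contDiff_iteratedDeriv {𝕜 F : Type*} [NontriviallyNormedField 𝕜]
    [NormedAddCommGroup F] [NormedSpace 𝕜 F] {f : 𝕜 → F} (n k : ℕ)
    (hf : ContDiff 𝕜 (n + k : ℕ) f) : ContDiff 𝕜 n (iteratedDeriv k f) := by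
  rw [iteratedDeriv_eq_iterate]
  exact hf.iterate_deriv' n k

theorem tendsto_atBot_of_add_of_ge {α G : Type*} [AddCommGroup G] [PartialOrder G]
    [IsOrderedAddMonoid G] {l : Filter α} {f g : α → G} (C : G) (hg : ∀ x, C ≤ g x)
    (h : Tendsto (fun x => f x + g x) l atBot) : Tendsto f l atBot :=
  (tendsto_atBot_add_left_of_ge l (-C) (fun x => neg_le_neg (hg x)) h).congr fun x => by abel

theorem tendsto_atBot_of_deriv_le_neg {f : ℝ → ℝ} (hf : Differentiable ℝ f) {c : ℝ}
    (hc : c < 0) (h : ∀ᶠ x in atTop, deriv f x ≤ c) : Tendsto f atTop atBot := by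
  obtain ⟨a, ha⟩ := eventually_atTop.mp h
  have hlin : ∀ x ≥ a, f x ≤ (f a - c * a) + c * x := fun x hx => by
    have := (convex_Ici a).image_sub_le_mul_sub_of_deriv_le hf.continuous.continuousOn
      hf.differentiableOn (fun y hy => ha y (interior_subset hy)) a Set.self_mem_Ici x hx hx
    linarith
  exact tendsto_atBot_mono' _ ((eventually_ge_atTop a).mono hlin)
    (tendsto_atBot_add_const_left _ _ (tendsto_id.const_mul_atTop_of_neg hc))

theorem tendsto_atBot_of_deriv_tendsto_atBot {f : ℝ → ℝ} (hf : Differentiable ℝ f)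
    (h : Tendsto (deriv f) atTop atBot) : Tendsto f atTop atBot :=
  tendsto_atBot_of_deriv_le_neg hf neg_one_lt_zero (h.eventually_le_atBot (-1))

theorem tendsto_atTop_atBot_of_iteratedDeriv_two {u : ℝ → ℝ} (hu : ContDiff ℝ 2 u)
    (h : Tendsto (iteratedDeriv 2 u) atTop atBot) : Tendsto u atTop atBot := by
  have hu' : Differentiable ℝ (deriv u) := by
    simpa only [iteratedDeriv_one] using hu.differentiable_iteratedDeriv 1 (by norm_num)
  rw [iteratedDeriv_succ, iteratedDeriv_one] at h
  exact tendsto_atBot_of_deriv_tendsto_atBot (hu.differentiable (by norm_num))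
    (tendsto_atBot_of_deriv_tendsto_atBot hu' h)

theorem tendsto_atBot_atBot_of_iteratedDeriv_two {u : ℝ → ℝ} (hu : ContDiff ℝ 2 u)
    (h : Tendsto (iteratedDeriv 2 u) atBot atBot) : Tendsto u atBot atBot := by
  have hneg : iteratedDeriv 2 (fun x => u (-x)) = fun x => iteratedDeriv 2 u (-x) := by
    ext x
    simp [iteratedDeriv_comp_neg]
  rw [← tendsto_comp_neg_atTop_iff] at h ⊢
  exact tendsto_atTop_atBot_of_iteratedDeriv_two (hu.comp contDiff_neg) (hneg ▸ h)

theorem tendsto_atBot_or_of_iteratedDeriv_two_neg {v : ℝ → ℝ} (hv : ContDiff ℝ 2 v)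
    (h : ∀ x, iteratedDeriv 2 v x < 0) : Tendsto v atTop atBot ∨ Tendsto v atBot atBot := by
  have hv₁ : Differentiable ℝ v := hv.differentiable (by norm_num)
  have hanti : StrictAnti (deriv v) :=
    strictAnti_of_deriv_neg fun x => by simpa [iteratedDeriv_succ] using h x
  rcases lt_or_ge (deriv v 0) 0 with h0 | h0
  · exact .inl <| tendsto_atBot_of_deriv_le_neg hv₁ h0
      ((eventually_ge_atTop 0).mono fun x hx => hanti.antitone hx)
  · refine .inr <| tendsto_comp_neg_atTop_iff.mp <|
      tendsto_atBot_of_deriv_le_neg (hv₁.comp differentiable_neg) (c := -deriv v (-1))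
        (by linarith [hanti neg_one_lt_zero]) ((eventually_ge_atTop 1).mono fun x hx => ?_)
    rw [deriv_comp_neg]
    linarith [hanti.antitone (show -x ≤ -1 by linarith)]

theorem iteratedDeriv_two_iteratedDeriv_two_add_const_mul {u : ℝ → ℝ} (hu : ContDiff ℝ 4 u)
    (p x : ℝ) :
    iteratedDeriv 2 (fun y => iteratedDeriv 2 u y + p * u y) x
      = iteratedDeriv 4 u x + p * iteratedDeriv 2 u x := by
  rw [iteratedDeriv_fun_add (f := iteratedDeriv 2 u) (g := fun y => p * u y)
    (hu.contDiff_iteratedDeriv 2 2).contDiffAt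
    (contDiffAt_const.mul (hu.of_le (by norm_num)).contDiffAt),
    iteratedDeriv_const_mul _ (hu.of_le (by norm_num)).contDiffAt]
  simp only [iteratedDeriv_eq_iterate, ← Function.iterate_add_apply]

theorem stmt17_general (r p : ℝ) :
    ¬ ∃ u : ℝ → ℝ, ContDiff ℝ 4 u ∧ (∃ M : ℝ, ∀ x : ℝ, |u x| ≤ M) ∧
      (∀ x : ℝ, 0 < u x) ∧
      ∀ x : ℝ, iteratedDeriv 4 u x + p * iteratedDeriv 2 u x
        + |u x| ^ (r - 2) * u x = 0 := by
  rintro ⟨u, hu, ⟨M, hM⟩, hpos, heq⟩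
  set v : ℝ → ℝ := fun x => iteratedDeriv 2 u x + p * u x
  have hu₂ : ContDiff ℝ 2 u := hu.of_le (by norm_num)
  have hv : ContDiff ℝ 2 v := (hu.contDiff_iteratedDeriv 2 2).add (contDiff_const.mul hu₂)
  have hv_concave : ∀ x, iteratedDeriv 2 v x < 0 := fun x => by
    have := mul_pos (Real.rpow_pos_of_pos (abs_pos.mpr (hpos x).ne') (r - 2)) (hpos x)
    rw [iteratedDeriv_two_iteratedDeriv_two_add_const_mul hu]
    linarith [heq x]
  have hpu : ∀ x, -(|p| * M) ≤ p * u x := fun x =>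
    calc -(|p| * M) ≤ -(|p| * |u x|) :=
          neg_le_neg (mul_le_mul_of_nonneg_left (hM x) (abs_nonneg p))
      _ = -|p * u x| := by rw [abs_mul]
      _ ≤ p * u x := neg_abs_le _
  have not_tendsto : ∀ (l : Filter ℝ) [l.NeBot], ¬ Tendsto u l atBot := fun l _ h => by
    obtain ⟨x, hx⟩ := (h.eventually_lt_atBot 0).exists
    exact (hpos x).not_gt hx
  rcases tendsto_atBot_or_of_iteratedDeriv_two_neg hv hv_concave with h | h
  · exact not_tendsto atTop
      (tendsto_atTop_atBot_of_iteratedDeriv_two hu₂ (tendsto_atBot_of_add_of_ge _ hpu h))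
  · exact not_tendsto atBot
      (tendsto_atBot_atBot_of_iteratedDeriv_two hu₂ (tendsto_atBot_of_add_of_ge _ hpu h))

/-- Let `r > 2` and `p ∈ ℝ`. There is no bounded, four times continuously
differentiable `u : ℝ → ℝ` with `u > 0` everywhere satisfying
`u'''' + p u'' + |u|^(r−2) u = 0` on all of `ℝ`. -/
theorem stmt17 (r p : ℝ) (hr : 2 < r) :
    ¬ ∃ u : ℝ → ℝ, ContDiff ℝ 4 u ∧ (∃ M : ℝ, ∀ x : ℝ, |u x| ≤ M) ∧
      (∀ x : ℝ, 0 < u x) ∧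
      ∀ x : ℝ, iteratedDeriv 4 u x + p * iteratedDeriv 2 u x
        + |u x| ^ (r - 2) * u x = 0 :=
  stmt17_general r p
end
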